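/- arXiv:2009.02758 — 5 statements merged into one kernel-verified Lean document; each statement's English description precedes it below -/
import Mathlib

section
/- Fix an integer k ≥ 2 and define the fringe sets B₁ = ([0, 2k+1] × [0, 2k+1]) \ ({(2,0), (0,2)} ∪ {(x,0), (0,y) : k+2 ≤ x, y ≤ 2k}) and B₂ = ([0, 2k+2] × [0, 2k+2]) \ ({(3,0), (0,3)} ∪ {(x,0), (0,y) : k+3 ≤ x, y ≤ 2k+1}) in ℤ². Then for all integers a, b ≥ 0 with a + b ≥ 1, aB₁ + bB₂ = ([0, 2k(a+b)+(a+2b)] × [0, 2k(a+b)+(a+2b)]) \ ({(2k(a+b−1)+(a+2b+1), 0), (0, 2k(a+b−1)+(a+2b+1))} ∪ {(x,0), (0,y) : k(2a+2b−1)+(a+2b+1) ≤ x, y ≤ 2k(a+b)+(a+2b−1)}). -/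
/-!
All sets involved have one shape: `fringe k N` is the square `[0, N]²` with the points
`N - 2k + 1` and `N - k + 1, …, N - 1` removed from both axes, so that `B₁ = fringe k (2k + 1)`
and `B₂ = fringe k (2k + 2)`. For `M, N ≥ 2k + 1` one has
`fringe k M + fringe k N = fringe k (M + N)`: off the axes the sumset of two squares is the full
square, and on an axis the admissible values `[0, N - 2k] ∪ [N - 2k + 2, N - k] ∪ {N}` of `M`
and of `N` add up to exactly the admissible values of `M + N`. Hence
`aB₁ + bB₂ = fringe k (a(2k + 1) + b(2k + 2))`.
-/

open Pointwise Finset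

/-- The `n`-fold iterated sumset: `iterSum 0 A = {0}`, `iterSum (n+1) A = A + iterSum n A`. -/
def iterSum {G : Type*} [AddCommGroup G] [DecidableEq G] : ℕ → Finset G → Finset G
  | 0, _ => {0}
  | n + 1, A => A + iterSum n A

lemma iterSum_zero {G : Type*} [AddCommGroup G] [DecidableEq G] (A : Finset G) :
    iterSum 0 A = 0 :=
  rfl

noncomputable def fringe (k N : ℤ) : Finset (ℤ × ℤ) :=
  (Icc 0 N ×ˢ Icc 0 N) \
    (({(N - 2*k + 1, 0), (0, N - 2*k + 1)} : Finset (ℤ × ℤ)) ∪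
      (Icc (N - k + 1) (N - 1)).image (fun x => (x, (0:ℤ))) ∪
      (Icc (N - k + 1) (N - 1)).image (fun y => ((0:ℤ), y)))

lemma fringe_eq_sdiff {k N h lo hi : ℤ} (hh : h = N - 2*k + 1) (hlo : lo = N - k + 1)
    (hhi : hi = N - 1) :
    fringe k N =
      (Icc 0 N ×ˢ Icc 0 N) \
        (({(h, 0), (0, h)} : Finset (ℤ × ℤ)) ∪
          (Icc lo hi).image (fun x => (x, (0:ℤ))) ∪
          (Icc lo hi).image (fun y => ((0:ℤ), y))) := by
  subst hh hlo hhi; rfl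

def AxisAdmissible (k N x : ℤ) : Prop :=
  0 ≤ x ∧ x ≤ N ∧ x ≠ N - 2*k + 1 ∧ (x ≤ N - k ∨ x = N)

lemma mem_fringe {k N x y : ℤ} :
    (x, y) ∈ fringe k N ↔
      0 ≤ x ∧ x ≤ N ∧ 0 ≤ y ∧ y ≤ N ∧
        (y = 0 → AxisAdmissible k N x) ∧ (x = 0 → AxisAdmissible k N y) := by
  simp only [fringe, AxisAdmissible, mem_sdiff, mem_product, mem_Icc, mem_union, mem_insert,
    mem_singleton, mem_image, Prod.mk.injEq]
  constructor
  · rintro ⟨⟨⟨hx0, hxN⟩, hy0, hyN⟩, hout⟩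
    refine ⟨hx0, hxN, hy0, hyN, ?_, ?_⟩ <;> rintro rfl
    · exact ⟨hx0, hxN, fun h => hout (.inl (.inl (.inl ⟨h, rfl⟩))),
        by by_contra! h; exact hout (.inl (.inr ⟨x, by omega, rfl, rfl⟩))⟩
    · exact ⟨hy0, hyN, fun h => hout (.inl (.inl (.inr ⟨rfl, h⟩))),
        by by_contra! h; exact hout (.inr ⟨y, by omega, rfl, rfl⟩)⟩
  · rintro ⟨hx0, hxN, hy0, hyN, hxadm, hyadm⟩
    refine ⟨⟨⟨hx0, hxN⟩, hy0, hyN⟩, ?_⟩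
    rintro (((⟨rfl, rfl⟩ | ⟨rfl, rfl⟩) | ⟨x, hx, rfl, rfl⟩) | ⟨y, hy, rfl, rfl⟩)
    · exact (hxadm rfl).2.2.1 rfl
    · exact (hyadm rfl).2.2.1 rfl
    · have := (hxadm rfl).2.2.2; omega
    · have := (hyadm rfl).2.2.2; omega

section Fringe

variable {k M N : ℤ}

lemma AxisAdmissible.add {p r : ℤ} (hp : AxisAdmissible k M p)
    (hr : AxisAdmissible k N r) : AxisAdmissible k (M + N) (p + r) := by
  unfold AxisAdmissible at *; omega

lemma AxisAdmissible.exists_add_eq (hk : 2 ≤ k) (hM : 2*k + 1 ≤ M) (hN : 2*k + 1 ≤ N)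
    {x : ℤ} (hx : AxisAdmissible k (M + N) x) :
    ∃ p r, AxisAdmissible k M p ∧ AxisAdmissible k N r ∧ p + r = x := by
  unfold AxisAdmissible at *
  rcases le_or_gt x (M - 2*k) with h | h
  · exact ⟨x, 0, by omega⟩
  rcases eq_or_ne x (M - 2*k + 1) with h | h
  · exact ⟨M - 2*k, 1, by omega⟩
  rcases le_or_gt x (M - k) with h | h
  · exact ⟨x, 0, by omega⟩
  rcases le_or_gt x (M - 1) with h | h
  · -- `x = M - j` with `0 < j < k`: take `k - j` from `N`, or `k - j + 1` to avoid its hole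
    rcases eq_or_ne (x - M + k) (N - 2*k + 1) with h' | h'
    · exact ⟨M - k - 1, x - M + k + 1, by omega⟩
    · exact ⟨M - k, x - M + k, by omega⟩
  rcases le_or_gt x (M + N - 2*k) with h | h
  · exact ⟨M, x - M, by omega⟩
  rcases le_or_gt x (M + N - k) with h | h
  · exact ⟨x - N, N, by omega⟩
  · exact ⟨M, N, by omega⟩

lemma exists_add_eq_axisAdmissible (hk : 2 ≤ k) (hM : 2*k + 1 ≤ M) (hN : 2*k + 1 ≤ N)
    {x : ℤ} (hx0 : 0 < x) (hxMN : x ≤ M + N) :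
    ∃ p r, 0 < p ∧ p ≤ M ∧ AxisAdmissible k N r ∧ p + r = x := by
  unfold AxisAdmissible
  rcases le_or_gt x M with h | h
  · exact ⟨x, 0, by omega⟩
  rcases le_or_gt (x - M) (N - 2*k) with h | h
  · exact ⟨M, x - M, by omega⟩
  rcases eq_or_ne (x - M) (N - 2*k + 1) with h | h
  · exact ⟨M - 1, x - M + 1, by omega⟩
  rcases le_or_gt (x - M) (N - k) with h | h
  · exact ⟨M, x - M, by omega⟩
  · exact ⟨x - N, N, by omega⟩

lemma mk_zero_mem_fringe {x : ℤ} (hx : AxisAdmissible k N x) : (x, 0) ∈ fringe k N :=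
  mem_fringe.2 ⟨hx.1, hx.2.1, le_rfl, hx.1.trans hx.2.1, fun _ => hx, fun h => h ▸ hx⟩

lemma zero_mk_mem_fringe {y : ℤ} (hy : AxisAdmissible k N y) : (0, y) ∈ fringe k N :=
  mem_fringe.2 ⟨le_rfl, hy.1.trans hy.2.1, hy.1, hy.2.1, fun h => h ▸ hy, fun _ => hy⟩

lemma mk_mem_fringe_of_pos {x y : ℤ} (hx : 0 < x) (hxN : x ≤ N) (hy : 0 < y) (hyN : y ≤ N) :
    (x, y) ∈ fringe k N :=
  mem_fringe.2 ⟨hx.le, hxN, hy.le, hyN, fun h => by omega, fun h => by omega⟩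

lemma fringe_add_subset : fringe k M + fringe k N ⊆ fringe k (M + N) := by
  rintro _ hxy
  obtain ⟨⟨p, q⟩, hpq, ⟨r, s⟩, hrs, rfl⟩ := mem_add.1 hxy
  rw [mem_fringe] at hpq hrs
  obtain ⟨hp0, hpM, hq0, hqM, hpadm, hqadm⟩ := hpq
  obtain ⟨hr0, hrN, hs0, hsN, hradm, hsadm⟩ := hrs
  refine mem_fringe.2 ⟨by omega, by omega, by omega, by omega, fun h => ?_, fun h => ?_⟩
  · obtain ⟨rfl, rfl⟩ : q = 0 ∧ s = 0 := by omega
    exact (hpadm rfl).add (hradm rfl)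
  · obtain ⟨rfl, rfl⟩ : p = 0 ∧ r = 0 := by omega
    exact (hqadm rfl).add (hsadm rfl)

lemma fringe_subset_add (hk : 2 ≤ k) (hM : 2*k + 1 ≤ M) (hN : 2*k + 1 ≤ N) :
    fringe k (M + N) ⊆ fringe k M + fringe k N := by
  rintro ⟨x, y⟩ hxy
  obtain ⟨hx0, hxMN, hy0, hyMN, hxadm, hyadm⟩ := mem_fringe.1 hxy
  suffices ∃ p q r s,
      (p, q) ∈ fringe k M ∧ (r, s) ∈ fringe k N ∧ p + r = x ∧ q + s = y by
    obtain ⟨p, q, r, s, hpq, hrs, rfl, rfl⟩ := this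
    exact mem_add.2 ⟨(p, q), hpq, (r, s), hrs, rfl⟩
  rcases eq_or_ne y 0 with rfl | hy_ne
  · obtain ⟨p, r, hp, hr, rfl⟩ := (hxadm rfl).exists_add_eq hk hM hN
    exact ⟨p, 0, r, 0, mk_zero_mem_fringe hp, mk_zero_mem_fringe hr, rfl, rfl⟩
  rcases eq_or_ne x 0 with rfl | hx_ne
  · obtain ⟨q, s, hq, hs, rfl⟩ := (hyadm rfl).exists_add_eq hk hM hN
    exact ⟨0, q, 0, s, zero_mk_mem_fringe hq, zero_mk_mem_fringe hs, rfl, rfl⟩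
  rcases eq_or_ne y 1 with rfl | hy1
  · obtain ⟨p, r, hp0, hpM, hr, rfl⟩ := exists_add_eq_axisAdmissible hk hM hN (by omega) hxMN
    exact ⟨p, 1, r, 0, mk_mem_fringe_of_pos hp0 hpM one_pos (by omega),
      mk_zero_mem_fringe hr, rfl, add_zero 1⟩
  rcases eq_or_ne x 1 with rfl | hx1
  · obtain ⟨q, s, hq0, hqM, hs, rfl⟩ := exists_add_eq_axisAdmissible hk hM hN (by omega) hyMN
    exact ⟨1, q, 0, s, mk_mem_fringe_of_pos one_pos (by omega) hq0 hqM,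
      zero_mk_mem_fringe hs, add_zero 1, rfl⟩
  -- both coordinates are at least `2`, so both summands can be kept off the axes
  exact ⟨max 1 (x - N), max 1 (y - N), x - max 1 (x - N), y - max 1 (y - N),
    mk_mem_fringe_of_pos (by omega) (by omega) (by omega) (by omega),
    mk_mem_fringe_of_pos (by omega) (by omega) (by omega) (by omega), by ring, by ring⟩

lemma fringe_add (hk : 2 ≤ k) (hM : 2*k + 1 ≤ M) (hN : 2*k + 1 ≤ N) :
    fringe k M + fringe k N = fringe k (M + N) :=
  fringe_add_subset.antisymm (fringe_subset_add hk hM hN)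

lemma iterSum_succ_fringe (hk : 2 ≤ k) (hN : 2*k + 1 ≤ N) (n : ℕ) :
    iterSum (n + 1) (fringe k N) = fringe k ((n + 1) * N) := by
  induction n with
  | zero => rw [iterSum, iterSum_zero, add_zero, Nat.cast_zero, zero_add, one_mul]
  | succ n ih =>
    rw [iterSum, ih, fringe_add hk hN (by nlinarith)]
    congr 1
    push_cast
    ring

lemma iterSum_fringe_add_iterSum_fringe (hk : 2 ≤ k) (hM : 2*k + 1 ≤ M) (hN : 2*k + 1 ≤ N)
    {a b : ℕ} (hab : 1 ≤ a + b) :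
    iterSum a (fringe k M) + iterSum b (fringe k N) = fringe k (a * M + b * N) := by
  obtain _ | a := a <;> obtain _ | b := b
  · omega
  · rw [iterSum_zero, zero_add, iterSum_succ_fringe hk hN]
    simp
  · rw [iterSum_zero, add_zero, iterSum_succ_fringe hk hM]
    simp
  · rw [iterSum_succ_fringe hk hM, iterSum_succ_fringe hk hN, fringe_add hk (by nlinarith)
      (by nlinarith)]
    push_cast
    rfl

end Fringe

theorem stmt2 (k : ℤ) (hk : 2 ≤ k)
    (B₁ B₂ : Finset (ℤ × ℤ))
    (hB₁ : B₁ = (Finset.Icc 0 (2*k+1) ×ˢ Finset.Icc 0 (2*k+1)) \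
      (({(2,0), (0,2)} : Finset (ℤ × ℤ)) ∪
        (Finset.Icc (k+2) (2*k)).image (fun x => (x, (0:ℤ))) ∪
        (Finset.Icc (k+2) (2*k)).image (fun y => ((0:ℤ), y))))
    (hB₂ : B₂ = (Finset.Icc 0 (2*k+2) ×ˢ Finset.Icc 0 (2*k+2)) \
      (({(3,0), (0,3)} : Finset (ℤ × ℤ)) ∪
        (Finset.Icc (k+3) (2*k+1)).image (fun x => (x, (0:ℤ))) ∪
        (Finset.Icc (k+3) (2*k+1)).image (fun y => ((0:ℤ), y))))
    (a b : ℕ) (hab : 1 ≤ a + b) :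
    iterSum a B₁ + iterSum b B₂ =
      (Finset.Icc 0 (2*k*((a:ℤ)+b) + ((a:ℤ)+2*b)) ×ˢ
        Finset.Icc 0 (2*k*((a:ℤ)+b) + ((a:ℤ)+2*b))) \
        (({(2*k*((a:ℤ)+b-1) + ((a:ℤ)+2*b+1), 0),
           (0, 2*k*((a:ℤ)+b-1) + ((a:ℤ)+2*b+1))} : Finset (ℤ × ℤ)) ∪
          (Finset.Icc (k*(2*(a:ℤ)+2*b-1) + ((a:ℤ)+2*b+1))
            (2*k*((a:ℤ)+b) + ((a:ℤ)+2*b-1))).image (fun x => (x, (0:ℤ))) ∪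
          (Finset.Icc (k*(2*(a:ℤ)+2*b-1) + ((a:ℤ)+2*b+1))
            (2*k*((a:ℤ)+b) + ((a:ℤ)+2*b-1))).image (fun y => ((0:ℤ), y))) := by
  rw [← fringe_eq_sdiff (by ring) (by ring) (by ring)] at hB₁ hB₂ ⊢
  rw [hB₁, hB₂, iterSum_fringe_add_iterSum_fringe hk (by omega) (by omega) hab]
  congr 1
  ring
end

section
/- Fix a positive integer k. Let A, B ⊆ ℕ₀² be finite and non-empty, and choose an integer m > k · max{a : (a, y) ∈ A or (x, a) ∈ A for some x, y} (m exceeds k times the largest coordinate appearing in A). Let C = A + m·B, where m·B = {(mb₁, mb₂) : (b₁, b₂) ∈ B} is the scalar dilation. Then |sC − dC| = |sA − dA| · |sB − dB| for all non-negative integers s, d with 1 ≤ s + d ≤ k. -/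
open Pointwise

/-- `sdSet s d A` is the generalized sumset `sA - dA`. -/
def sdSet {G : Type*} [AddCommGroup G] [DecidableEq G] (s d : ℕ) (A : Finset G) : Finset G :=
  iterSum s A - iterSum d A

lemma addSubAddComm {G : Type*} [AddCommGroup G] [DecidableEq G] (a b c d : Finset G) :
    (a + b) - (c + d) = (a - c) + (b - d) := by
  ext x
  simp only [Finset.mem_sub, Finset.mem_add]
  constructor
  · rintro ⟨y, ⟨p, hp, q, hq, rfl⟩, z, ⟨r, hr, t, ht, rfl⟩, rfl⟩
    exact ⟨p - r, ⟨p, hp, r, hr, rfl⟩, q - t, ⟨q, hq, t, ht, rfl⟩, by abel⟩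
  · rintro ⟨y, ⟨p, hp, r, hr, rfl⟩, z, ⟨q, hq, t, ht, rfl⟩, rfl⟩
    exact ⟨p + q, ⟨p, hp, q, hq, rfl⟩, r + t, ⟨r, hr, t, ht, rfl⟩, by abel⟩

lemma iterSum_add {G : Type*} [AddCommGroup G] [DecidableEq G] (n : ℕ) (X Y : Finset G) :
    iterSum n (X + Y) = iterSum n X + iterSum n Y := by
  induction n with
  | zero => simp [iterSum]
  | succ n ih => simp only [iterSum, ih, add_add_add_comm]

lemma iterSum_image {G H : Type*} [AddCommGroup G] [AddCommGroup H] [DecidableEq G]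
    [DecidableEq H] (f : G →+ H) (n : ℕ) (X : Finset G) :
    iterSum n (X.image f) = (iterSum n X).image f := by
  induction n with
  | zero => simp [iterSum]
  | succ n ih => simp only [iterSum, ih, Finset.image_add]

lemma sdSet_add {G : Type*} [AddCommGroup G] [DecidableEq G] (s d : ℕ) (X Y : Finset G) :
    sdSet s d (X + Y) = sdSet s d X + sdSet s d Y := by
  simp only [sdSet, iterSum_add, addSubAddComm]

lemma sdSet_image {G H : Type*} [AddCommGroup G] [AddCommGroup H] [DecidableEq G]
    [DecidableEq H] (f : G →+ H) (s d : ℕ) (X : Finset G) :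
    sdSet s d (X.image f) = (sdSet s d X).image f := by
  have h : ∀ U V : Finset G, (U - V).image ⇑f = U.image ⇑f - V.image ⇑f :=
    fun U V => Finset.image_image₂_distrib fun a b => map_sub f a b
  simp only [sdSet, iterSum_image, h]

theorem stmt6 (k : ℕ) (hk : 0 < k) (A B : Finset (ℤ × ℤ))
    (hA : A.Nonempty) (hB : B.Nonempty)
    (hAnn : ∀ p ∈ A, 0 ≤ p.1 ∧ 0 ≤ p.2) (hBnn : ∀ p ∈ B, 0 ≤ p.1 ∧ 0 ≤ p.2)
    (m : ℤ) (hm : ∀ p ∈ A, (k : ℤ) * p.1 < m ∧ (k : ℤ) * p.2 < m)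
    (C : Finset (ℤ × ℤ)) (hC : C = A + B.image (fun p => (m * p.1, m * p.2))) :
    ∀ s d : ℕ, 1 ≤ s + d → s + d ≤ k →
      (sdSet s d C).card = (sdSet s d A).card * (sdSet s d B).card := by
  intro s d hsd1 hsdk
  -- m is positive
  obtain ⟨a0, ha0⟩ := hA
  have hm0 : 0 < m := lt_of_le_of_lt (mul_nonneg (by positivity) (hAnn a0 ha0).1) (hm a0 ha0).1
  -- the scaling map as an AddMonoidHom
  set f : (ℤ × ℤ) →+ (ℤ × ℤ) := AddMonoidHom.mulLeft ((m, m) : ℤ × ℤ) with hf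
  have hfeq : (fun p : ℤ × ℤ => (m * p.1, m * p.2)) = ⇑f := by
    funext p; simp [hf, Prod.mul_def]
  have hfinj : Function.Injective (⇑f) := by
    intro p q h
    simp only [hf, AddMonoidHom.coe_mulLeft, Prod.mul_def, Prod.ext_iff] at h
    exact Prod.ext (mul_left_cancel₀ hm0.ne' h.1) (mul_left_cancel₀ hm0.ne' h.2)
  -- coordinate bounds on iterated sumsets of A
  have hbound : ∀ n : ℕ, ∀ p ∈ iterSum n A, 0 ≤ p.1 ∧ 0 ≤ p.2 ∧
      (k : ℤ) * p.1 ≤ n * (m - 1) ∧ (k : ℤ) * p.2 ≤ n * (m - 1) := by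
    intro n
    induction n with
    | zero => intro p hp; simp [iterSum] at hp; simp [hp]
    | succ n ih =>
      intro p hp
      rw [iterSum, Finset.mem_add] at hp
      obtain ⟨a, ha, q, hq, rfl⟩ := hp
      obtain ⟨h1, h2, h3, h4⟩ := ih q hq
      obtain ⟨g1, g2⟩ := hAnn a ha
      obtain ⟨j1, j2⟩ := hm a ha
      refine ⟨by simp [Prod.fst_add]; linarith, by simp [Prod.snd_add]; linarith, ?_, ?_⟩
      · simp only [Prod.fst_add, mul_add, Nat.cast_succ, add_mul, one_mul]
        linarith
      · simp only [Prod.snd_add, mul_add, Nat.cast_succ, add_mul, one_mul]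
        linarith
  -- bounds on elements of sdSet s d A
  have hsdbound : ∀ x ∈ sdSet s d A,
      -((d : ℤ) * (m - 1)) ≤ (k : ℤ) * x.1 ∧ (k : ℤ) * x.1 ≤ s * (m - 1) ∧
      -((d : ℤ) * (m - 1)) ≤ (k : ℤ) * x.2 ∧ (k : ℤ) * x.2 ≤ s * (m - 1) := by
    intro x hx
    rw [sdSet, Finset.mem_sub] at hx
    obtain ⟨u, hu, v, hv, rfl⟩ := hx
    obtain ⟨u1, u2, u3, u4⟩ := hbound s u hu
    obtain ⟨v1, v2, v3, v4⟩ := hbound d v hv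
    have hku1 : (0:ℤ) ≤ (k : ℤ) * u.1 := mul_nonneg (by positivity) u1
    have hku2 : (0:ℤ) ≤ (k : ℤ) * u.2 := mul_nonneg (by positivity) u2
    have hkv1 : (0:ℤ) ≤ (k : ℤ) * v.1 := mul_nonneg (by positivity) v1
    have hkv2 : (0:ℤ) ≤ (k : ℤ) * v.2 := mul_nonneg (by positivity) v2
    simp only [Prod.fst_sub, Prod.snd_sub, mul_sub]
    refine ⟨by linarith, by linarith, by linarith, by linarith⟩
  -- key cancellation: if two elements of sdSet s d A differ by a multiple of m, they are equal
  have hkey : ∀ x ∈ sdSet s d A, ∀ y ∈ sdSet s d A, ∀ t : ℤ × ℤ,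
      x - y = f t → x = y ∧ t = 0 := by
    intro x hx y hy t ht
    obtain ⟨x1, x2, x3, x4⟩ := hsdbound x hx
    obtain ⟨y1, y2, y3, y4⟩ := hsdbound y hy
    have hm1 : (0:ℤ) ≤ m - 1 := by linarith
    have hkZ : (0:ℤ) < (k : ℤ) := by exact_mod_cast hk
    have hsdm : (s : ℤ) * (m - 1) + (d : ℤ) * (m - 1) ≤ (k : ℤ) * (m - 1) := by
      have h1 : (s : ℤ) + (d : ℤ) ≤ (k : ℤ) := by exact_mod_cast hsdk
      have := mul_le_mul_of_nonneg_right h1 hm1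
      linarith [this]
    have ht1 : x.1 - y.1 = m * t.1 := by
      have := congrArg Prod.fst ht
      simpa [hf, Prod.mul_def] using this
    have ht2 : x.2 - y.2 = m * t.2 := by
      have := congrArg Prod.snd ht
      simpa [hf, Prod.mul_def] using this
    have habs1 : |x.1 - y.1| ≤ m - 1 := by
      rw [abs_le]
      constructor
      · have h : (k:ℤ) * (-(m-1)) ≤ (k:ℤ) * (x.1 - y.1) := by
          rw [mul_sub]; linarith
        exact le_of_mul_le_mul_left h hkZ
      · have h : (k:ℤ) * (x.1 - y.1) ≤ (k:ℤ) * (m-1) := by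
          rw [mul_sub]; linarith
        exact le_of_mul_le_mul_left h hkZ
    have habs2 : |x.2 - y.2| ≤ m - 1 := by
      rw [abs_le]
      constructor
      · have h : (k:ℤ) * (-(m-1)) ≤ (k:ℤ) * (x.2 - y.2) := by
          rw [mul_sub]; linarith
        exact le_of_mul_le_mul_left h hkZ
      · have h : (k:ℤ) * (x.2 - y.2) ≤ (k:ℤ) * (m-1) := by
          rw [mul_sub]; linarith
        exact le_of_mul_le_mul_left h hkZ
    have ht10 : t.1 = 0 := by
      by_contra h
      have h1 : (1:ℤ) ≤ |t.1| := Int.one_le_abs (by simpa using h)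
      have h2 : m * 1 ≤ m * |t.1| := mul_le_mul_of_nonneg_left h1 hm0.le
      rw [ht1, abs_mul, abs_of_pos hm0] at habs1
      linarith
    have ht20 : t.2 = 0 := by
      by_contra h
      have h1 : (1:ℤ) ≤ |t.2| := Int.one_le_abs (by simpa using h)
      have h2 : m * 1 ≤ m * |t.2| := mul_le_mul_of_nonneg_left h1 hm0.le
      rw [ht2, abs_mul, abs_of_pos hm0] at habs2
      linarith
    have ht0 : t = 0 := Prod.ext ht10 ht20
    refine ⟨?_, ht0⟩
    have : x - y = 0 := by rw [ht, ht0, map_zero]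
    exact sub_eq_zero.mp this
  -- decompose sdSet s d C
  rw [hfeq] at hC
  have hdecomp : sdSet s d C = sdSet s d A + (sdSet s d B).image f := by
    rw [hC, sdSet_add, sdSet_image]
  rw [hdecomp, Finset.add_def]
  rw [Finset.card_image_of_injOn, Finset.card_product,
    Finset.card_image_of_injective _ hfinj]
  rintro ⟨x, u⟩ hxu ⟨y, v⟩ hyv hxy
  simp only [Finset.mem_product, Finset.mem_coe] at hxu hyv
  obtain ⟨hx, hu⟩ := hxu
  obtain ⟨hy, hv⟩ := hyv
  obtain ⟨p, hp, rfl⟩ := Finset.mem_image.mp hu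
  obtain ⟨q, hq, rfl⟩ := Finset.mem_image.mp hv
  simp only at hxy
  have : x - y = f (q - p) := by rw [map_sub]; linear_combination (norm := module) hxy
  obtain ⟨h1, h2⟩ := hkey x hx y hy (q - p) this
  have : q = p := by
    have := sub_eq_zero.mp h2
    exact this
  subst this h1
  rfl
end

section
/- For each positive integer k there exists a k-generational set in ℤ²: a finite set A ⊆ ℤ² such that |cA + cA| > |cA − cA| for all integers 1 ≤ c ≤ k. -/
open Pointwise

/-!
The witness is `A = {0} × L ∪ {1} × R ⊆ ℤ²` with `T = {0, K, K + 1}`, `L = T ∪ [W, n]` and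
`R = {n} ∪ [0, n - W]`, so that row `j` of `cA` is `jR + (c - j)L`. The `2c - 1` inner rows of
`cA + cA = (2c)A` are all of `[0, 2cn]`, while the `2c - 1` inner rows of `cA - cA` lie in
`[-cn, cn]`; so only the outer rows matter. In the sumset these are `(2c)L`, the disjoint union
of `(2c)T` and `[W, 2cn]`, and `(2c)R = {2cn} ∪ [0, 2cn - W]`; in the difference set they are
`±(cR - cL)`, with `cR - cL ⊆ [-cn, cn - W] ∪ (cn - cT)`. Everything then reduces to
`|(2c)T| ≥ 2|cT|`, which holds because for `m ≤ K` the set `mT` is the disjoint union of the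
intervals `[iK, iK + i]`, `i ≤ m`.
-/

open Finset

theorem iterSum_eq_nsmul {G : Type*} [AddCommGroup G] [DecidableEq G] (n : ℕ) (A : Finset G) :
    iterSum n A = n • A := by
  induction n with
  | zero => rfl
  | succ n ih => rw [iterSum, ih, succ_nsmul']

theorem nsmul_Icc_subset {α : Type*} [AddCommMonoid α] [PartialOrder α] [IsOrderedAddMonoid α]
    [LocallyFiniteOrder α] [DecidableEq α] (a b : α) (m : ℕ) :
    m • Icc a b ⊆ Icc (m • a) (m • b) := by
  induction m with
  | zero => simp only [zero_nsmul, zero_subset, mem_Icc, le_refl, and_self]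
  | succ m ih =>
    simp only [succ_nsmul']
    exact (add_subset_add_left ih).trans (Icc_add_Icc_subset _ _ _ _)

section TwoRows

variable {G : Type*} [DecidableEq G]

def twoRowSet (L R : Finset G) : Finset (ℤ × G) := {0} ×ˢ L ∪ {1} ×ˢ R

theorem mem_twoRowSet {L R : Finset G} {p : ℤ × G} :
    p ∈ twoRowSet L R ↔ (p.1 = 0 ∧ p.2 ∈ L) ∨ (p.1 = 1 ∧ p.2 ∈ R) := by
  simp only [twoRowSet, mem_union, mem_product, mem_singleton]

theorem mem_nsmul_twoRowSet [AddCommMonoid G] {L R : Finset G} {c : ℕ} {p : ℤ × G} :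
    p ∈ c • twoRowSet L R ↔ ∃ j ≤ c, p.1 = j ∧ p.2 ∈ j • R + (c - j) • L := by
  induction c generalizing p with
  | zero => simp [Prod.ext_iff]
  | succ c ih =>
    rw [succ_nsmul', mem_add]
    constructor
    · rintro ⟨a, ha, q, hq, rfl⟩
      obtain ⟨j, hj, hq1, hq2⟩ := ih.1 hq
      rcases mem_twoRowSet.1 ha with ⟨ha1, ha2⟩ | ⟨ha1, ha2⟩
      · refine ⟨j, by omega, by simp [ha1, hq1], ?_⟩
        rw [show c + 1 - j = c - j + 1 by omega, succ_nsmul', add_left_comm]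
        exact add_mem_add ha2 hq2
      · refine ⟨j + 1, by omega, by simp [ha1, hq1, add_comm], ?_⟩
        rw [Nat.add_sub_add_right, succ_nsmul', add_assoc]
        exact add_mem_add ha2 hq2
    · rintro ⟨j, hj, hp1, hp2⟩
      cases j with
      | zero =>
        rw [zero_nsmul, zero_add, Nat.sub_zero, succ_nsmul', mem_add] at hp2
        obtain ⟨l, hl, z, hz, hlz⟩ := hp2
        refine ⟨(0, l), mem_twoRowSet.2 (Or.inl ⟨rfl, hl⟩), (0, z), ih.2 ⟨0, by omega, rfl, ?_⟩,
          Prod.ext (by simp [hp1]) (by simpa using hlz)⟩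
        simpa using hz
      | succ j =>
        rw [succ_nsmul', add_assoc, mem_add, Nat.add_sub_add_right] at hp2
        obtain ⟨r, hr, z, hz, hrz⟩ := hp2
        exact ⟨(1, r), mem_twoRowSet.2 (Or.inr ⟨rfl, hr⟩), (j, z), ih.2 ⟨j, by omega, rfl, hz⟩,
          Prod.ext (by simp [hp1, add_comm]) (by simpa using hrz)⟩

theorem card_nsmul_twoRowSet_ge [AddCommMonoid G] {L R I : Finset G} {m : ℕ} (hm : 0 < m)
    (hI : ∀ j, 0 < j → j < m → I ⊆ j • R + (m - j) • L) :
    #(m • L) + #(m • R) + (m - 1) * #I ≤ #(m • twoRowSet L R) := by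
  have hsub : {0} ×ˢ (m • L) ∪ {(m : ℤ)} ×ˢ (m • R) ∪ Ioo (0 : ℤ) m ×ˢ I ⊆
      m • twoRowSet L R := by
    rintro ⟨i, x⟩ hp
    simp only [mem_union, mem_product, mem_singleton, mem_Ioo] at hp
    rw [mem_nsmul_twoRowSet]
    rcases hp with (⟨rfl, hx⟩ | ⟨rfl, hx⟩) | ⟨hi, hx⟩
    · exact ⟨0, by omega, rfl, by simpa using hx⟩
    · exact ⟨m, le_rfl, rfl, by simpa using hx⟩
    · lift i to ℕ using hi.1.le
      exact ⟨i, by omega, rfl, hI i (by omega) (by omega) hx⟩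
  have hdisj₁ : Disjoint ({0} ×ˢ (m • L)) ({(m : ℤ)} ×ˢ (m • R)) :=
    disjoint_product.2 (Or.inl (by simp; omega))
  have hdisj₂ : Disjoint ({0} ×ˢ (m • L) ∪ {(m : ℤ)} ×ˢ (m • R)) (Ioo (0 : ℤ) m ×ˢ I) :=
    disjoint_union_left.2 ⟨disjoint_product.2 (Or.inl (by simp)),
      disjoint_product.2 (Or.inl (by simp))⟩
  calc #(m • L) + #(m • R) + (m - 1) * #I
      = #({0} ×ˢ (m • L) ∪ {(m : ℤ)} ×ˢ (m • R) ∪ Ioo (0 : ℤ) m ×ˢ I) := by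
        rw [card_union_of_disjoint hdisj₂, card_union_of_disjoint hdisj₁, card_product,
          card_product, card_product, Int.card_Ioo,
          show ((m : ℤ) - 0 - 1).toNat = m - 1 by omega]
        simp only [card_singleton, one_mul]
    _ ≤ #(m • twoRowSet L R) := card_le_card hsub

theorem card_nsmul_twoRowSet_sub_le [AddCommGroup G] {L R J : Finset G} {c : ℕ}
    (hJ : ∀ i ≤ c, ∀ j ≤ c, (i • R + (c - i) • L) - (j • R + (c - j) • L) ⊆ J) :
    #(c • twoRowSet L R - c • twoRowSet L R) ≤ 2 * #(c • R - c • L) + (2 * c - 1) * #J := by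
  have hsub : c • twoRowSet L R - c • twoRowSet L R ⊆
      {(c : ℤ)} ×ˢ (c • R - c • L) ∪ {-(c : ℤ)} ×ˢ (c • L - c • R) ∪ Ioo (-(c : ℤ)) c ×ˢ J := by
    intro p hp
    obtain ⟨a, ha, b, hb, rfl⟩ := mem_sub.1 hp
    obtain ⟨i, hi, ha1, ha2⟩ := mem_nsmul_twoRowSet.1 ha
    obtain ⟨j, hj, hb1, hb2⟩ := mem_nsmul_twoRowSet.1 hb
    have hab := sub_mem_sub ha2 hb2
    simp only [mem_union, mem_product, mem_singleton, mem_Ioo, Prod.fst_sub, Prod.snd_sub, ha1, hb1]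
    by_cases hij : i = c ∧ j = 0
    · obtain ⟨rfl, rfl⟩ := hij
      exact Or.inl (Or.inl ⟨by simp, by simpa using hab⟩)
    by_cases hji : i = 0 ∧ j = c
    · obtain ⟨rfl, rfl⟩ := hji
      exact Or.inl (Or.inr ⟨by simp, by simpa using hab⟩)
    exact Or.inr ⟨⟨by omega, by omega⟩, hJ i hi j hj hab⟩
  calc #(c • twoRowSet L R - c • twoRowSet L R)
      ≤ #({(c : ℤ)} ×ˢ (c • R - c • L) ∪ {-(c : ℤ)} ×ˢ (c • L - c • R) ∪ Ioo (-(c : ℤ)) c ×ˢ J) :=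
        card_le_card hsub
    _ ≤ #({(c : ℤ)} ×ˢ (c • R - c • L)) + #({-(c : ℤ)} ×ˢ (c • L - c • R))
          + #(Ioo (-(c : ℤ)) c ×ˢ J) :=
        (card_union_le _ _).trans (Nat.add_le_add_right (card_union_le _ _) _)
    _ = 2 * #(c • R - c • L) + (2 * c - 1) * #J := by
        rw [← neg_sub (c • R), card_product, card_product, card_product, card_neg, Int.card_Ioo,
          show ((c : ℤ) - -c - 1).toNat = 2 * c - 1 by omega]
        simp only [card_singleton]
        ring

end TwoRows

section Integers

variable {W n : ℤ}

theorem nsmul_insert_Icc (hW : 0 ≤ W) (hWn : 2 * W ≤ n) {m : ℕ} (hm : 0 < m) :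
    m • insert n (Icc 0 (n - W)) = insert (m * n) (Icc 0 (m * n - W)) := by
  induction m, hm using Nat.le_induction with
  | base => simp
  | succ m hm ih =>
    have hmn : n ≤ m * n := le_mul_of_one_le_left (by omega) (by exact_mod_cast hm)
    rw [succ_nsmul', ih, Nat.cast_succ, add_one_mul]
    ext x
    simp only [mem_add, mem_insert, mem_Icc]
    constructor
    · rintro ⟨y, hy, z, hz, rfl⟩
      omega
    · intro hx
      by_cases h₁ : x = m * n + n
      · exact ⟨n, by omega, m * n, by omega, by omega⟩
      by_cases h₂ : x ≤ m * n - W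
      · exact ⟨0, by omega, x, by omega, by omega⟩
      by_cases h₃ : n ≤ x
      · exact ⟨n, by omega, x - n, by omega, by omega⟩
      exact ⟨x - (m * n - W), by omega, m * n - W, by omega, by omega⟩

theorem nsmul_subset_Icc_mul {T : Finset ℤ} (hT : T ⊆ Icc 0 n) (m : ℕ) :
    m • T ⊆ Icc 0 (m * n) := by
  simpa using (nsmul_subset_nsmul_left hT).trans (nsmul_Icc_subset 0 n m)

theorem nsmul_union_Icc {T : Finset ℤ} (hT0 : 0 ∈ T) (hT : T ⊆ Icc 0 n) (hW : 0 ≤ W)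
    (hWn : 2 * W ≤ n) {m : ℕ} (hm : 0 < m) :
    m • (T ∪ Icc W n) = m • T ∪ Icc W (m * n) := by
  induction m, hm using Nat.le_induction with
  | base => simp
  | succ m hm ih =>
    have hmn : n ≤ m * n := le_mul_of_one_le_left (by omega) (by exact_mod_cast hm)
    have hmT := nsmul_subset_Icc_mul hT m
    rw [succ_nsmul', ih, succ_nsmul' T, Nat.cast_succ, add_one_mul]
    ext x
    simp only [mem_union, mem_add, mem_Icc]
    constructor
    · rintro ⟨y, hy, z, hz, rfl⟩
      rcases hy with hy | hy <;> rcases hz with hz | hz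
      · exact Or.inl ⟨y, hy, z, hz, rfl⟩
      · have := mem_Icc.1 (hT hy)
        omega
      · have := mem_Icc.1 (hmT hz)
        omega
      · omega
    · rintro (⟨y, hy, z, hz, rfl⟩ | hx)
      · exact ⟨y, Or.inl hy, z, Or.inl hz, rfl⟩
      by_cases h₁ : x ≤ m * n
      · exact ⟨0, Or.inl hT0, x, Or.inr ⟨hx.1, h₁⟩, zero_add x⟩
      by_cases h₂ : W ≤ x - m * n
      · exact ⟨x - m * n, Or.inr ⟨h₂, by omega⟩, m * n, Or.inr ⟨by omega, le_rfl⟩, by ring⟩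
      exact ⟨W, Or.inr ⟨le_rfl, by omega⟩, x - W, Or.inr ⟨by omega, by omega⟩, by ring⟩

theorem Icc_subset_insert_Icc_add_union_Icc {X : Finset ℤ} {p q : ℤ} (hX : 0 ∈ X) (hW : 0 ≤ W)
    (hp : 2 * W ≤ p) (hq : 2 * W ≤ q) :
    Icc 0 (p + q) ⊆ insert p (Icc 0 (p - W)) + (X ∪ Icc W q) := by
  intro x hx
  rw [mem_Icc] at hx
  simp only [mem_add, mem_insert, mem_union, mem_Icc]
  by_cases h₁ : x ≤ p - W
  · exact ⟨x, Or.inr ⟨hx.1, h₁⟩, 0, Or.inl hX, add_zero x⟩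
  by_cases h₂ : x ≤ p
  · exact ⟨x - W, Or.inr ⟨by omega, by omega⟩, W, Or.inr ⟨le_rfl, by omega⟩, by ring⟩
  by_cases h₃ : x ≤ p + q - W
  · exact ⟨p - W, Or.inr ⟨by omega, le_rfl⟩, x - (p - W), Or.inr ⟨by omega, by omega⟩, by ring⟩
  exact ⟨p, Or.inl rfl, x - p, Or.inr ⟨by omega, by omega⟩, by ring⟩

theorem insert_Icc_sub_union_Icc_subset {X : Finset ℤ} {N : ℤ} (hX : X ⊆ Icc 0 N) (hW : 0 ≤ W) :
    insert N (Icc 0 (N - W)) - (X ∪ Icc W N) ⊆ Icc (-N) (N - W) ∪ X.image (N - ·) := by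
  intro x hx
  obtain ⟨y, hy, z, hz, rfl⟩ := mem_sub.1 hx
  simp only [mem_insert, mem_union, mem_Icc, mem_image] at hy hz ⊢
  rcases hz with hz | hz
  · have := mem_Icc.1 (hX hz)
    rcases hy with rfl | hy
    · exact Or.inr ⟨z, hz, rfl⟩
    · exact Or.inl ⟨by omega, by omega⟩
  · exact Or.inl ⟨by omega, by omega⟩

noncomputable def triangle (K : ℤ) (m : ℕ) : Finset ℤ :=
  (range (m + 1)).biUnion fun i => Icc (i * K) (i * K + i)

theorem mem_triangle {K x : ℤ} {m : ℕ} :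
    x ∈ triangle K m ↔ ∃ i ≤ m, i * K ≤ x ∧ x ≤ i * K + i := by
  simp [triangle]

theorem nsmul_triple_eq_triangle (K : ℤ) (m : ℕ) :
    m • ({0, K, K + 1} : Finset ℤ) = triangle K m := by
  induction m with
  | zero =>
    ext x
    simp only [zero_nsmul, mem_zero, mem_triangle, Nat.le_zero, exists_eq_left]
    omega
  | succ m ih =>
    rw [succ_nsmul', ih]
    ext x
    simp only [mem_add, mem_insert, mem_singleton, mem_triangle]
    constructor
    · rintro ⟨y, hy, z, ⟨i, hi, hz⟩, rfl⟩
      rcases hy with rfl | rfl | rfl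
      · exact ⟨i, by omega, by omega⟩
      · exact ⟨i + 1, by omega, by push_cast [add_one_mul]; omega⟩
      · exact ⟨i + 1, by omega, by push_cast [add_one_mul]; omega⟩
    · rintro ⟨i, hi, hx⟩
      rcases (show i ≤ m ∨ i = m + 1 by omega) with hi | rfl
      · exact ⟨0, Or.inl rfl, x, ⟨i, hi, hx⟩, zero_add x⟩
      push_cast [add_one_mul] at hx
      by_cases h : x ≤ m * K + K + m
      · exact ⟨K, by simp, x - K, ⟨m, le_rfl, by omega⟩, by ring⟩
      · exact ⟨K + 1, by simp, x - (K + 1), ⟨m, le_rfl, by omega⟩, by ring⟩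

theorem two_mul_card_triangle {K : ℤ} {m : ℕ} (hm : (m : ℤ) ≤ K) :
    2 * #(triangle K m) = (m + 1) * (m + 2) := by
  have hlt : ∀ i j : ℕ, i < j → j ≤ m → (i : ℤ) * K + i < j * K := fun i j hij hj => by
    have : (i : ℤ) + 1 ≤ j := by exact_mod_cast hij
    have : (j : ℤ) ≤ m := by exact_mod_cast hj
    nlinarith
  have hdisj : (range (m + 1) : Set ℕ).PairwiseDisjoint fun i => Icc ((i : ℤ) * K) (i * K + i) := by
    intro i hi j hj hij
    simp only [coe_range, Set.mem_Iio] at hi hj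
    refine disjoint_left.2 fun x hx hx' => ?_
    rw [mem_Icc] at hx hx'
    rcases hij.lt_or_gt with h | h
    · linarith [hlt i j h (by omega)]
    · linarith [hlt j i h (by omega)]
  have hcard : ∀ i : ℕ, #(Icc ((i : ℤ) * K) (i * K + i)) = i + 1 := fun i => by
    rw [Int.card_Icc]
    omega
  rw [triangle, card_biUnion hdisj]
  simp only [hcard]
  have := sum_range_id_mul_two (m + 2)
  rw [sum_range_succ', add_zero] at this
  rw [mul_comm, this, show m + 2 - 1 = m + 1 from rfl, mul_comm]

theorem two_mul_card_nsmul_triple_le {K : ℤ} {c : ℕ} (hc : 0 < c) (hcK : 2 * c ≤ K) :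
    2 * #(c • ({0, K, K + 1} : Finset ℤ)) ≤ #((2 * c) • ({0, K, K + 1} : Finset ℤ)) := by
  rw [nsmul_triple_eq_triangle, nsmul_triple_eq_triangle]
  have h₁ := two_mul_card_triangle (K := K) (m := c) (by omega)
  have h₂ := two_mul_card_triangle (K := K) (m := 2 * c) (by push_cast; omega)
  nlinarith

end Integers

section GenerationalSet

variable {K W n : ℤ}

noncomputable def generationalSet (K W n : ℤ) : Finset (ℤ × ℤ) :=
  twoRowSet ({0, K, K + 1} ∪ Icc W n) (insert n (Icc 0 (n - W)))

theorem card_nsmul_generationalSet_ge {m : ℕ} (hm : 0 < m) (hK : 0 ≤ K)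
    (hKW : m * (K + 1) < W) (hWn : 2 * W ≤ n) :
    #(m • ({0, K, K + 1} : Finset ℤ)) + 2 * (m * n - W + 1) + 1 + (m - 1) * (m * n + 1)
      ≤ (#(m • generationalSet K W n) : ℤ) := by
  unfold generationalSet
  set T : Finset ℤ := {0, K, K + 1}
  have hm1 : (1 : ℤ) ≤ m := by exact_mod_cast hm
  have hW : 0 < W := by nlinarith
  have hmn : n ≤ m * n := le_mul_of_one_le_left (by omega) hm1
  have hT0 : (0 : ℤ) ∈ T := by simp [T]
  have hT : T ⊆ Icc 0 (K + 1) := by simp [T, insert_subset_iff]; omega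
  have hTn : T ⊆ Icc 0 n := hT.trans (Icc_subset_Icc le_rfl (by nlinarith))
  have hmT := nsmul_subset_Icc_mul hT m
  have hL : (#(m • (T ∪ Icc W n)) : ℤ) = #(m • T) + (m * n - W + 1) := by
    rw [nsmul_union_Icc hT0 hTn hW.le hWn hm, card_union_of_disjoint, Int.card_Icc]
    · push_cast
      omega
    · exact disjoint_left.2 fun x hx hx' => by
        have := mem_Icc.1 (hmT hx)
        rw [mem_Icc] at hx'
        omega
  have hR : (#(m • insert n (Icc 0 (n - W))) : ℤ) = (m * n - W + 1) + 1 := by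
    rw [nsmul_insert_Icc hW.le hWn hm, card_insert_of_notMem (by simp; omega), Int.card_Icc]
    push_cast
    omega
  have hrows : ∀ j, 0 < j → j < m →
      Icc 0 (m * n) ⊆ j • insert n (Icc 0 (n - W)) + (m - j) • (T ∪ Icc W n) := fun j hj hjm => by
    rw [nsmul_insert_Icc hW.le hWn hj, nsmul_union_Icc hT0 hTn hW.le hWn (by omega)]
    have hj1 : (1 : ℤ) ≤ j := by exact_mod_cast hj
    have hmj : (1 : ℤ) ≤ (m - j : ℕ) := by exact_mod_cast (show 1 ≤ m - j by omega)
    convert Icc_subset_insert_Icc_add_union_Icc (zero_mem_nsmul hT0) hW.le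
      (le_mul_of_one_le_left (by omega) hj1 |>.trans' hWn)
      (le_mul_of_one_le_left (by omega) hmj |>.trans' hWn) using 2
    push_cast [Nat.cast_sub hjm.le]
    ring
  have hS := card_nsmul_twoRowSet_ge hm hrows
  rw [Int.card_Icc] at hS
  zify [hm] at hS
  rw [hL, hR, show (((m * n + 1 - 0).toNat : ℕ) : ℤ) = m * n + 1 by omega] at hS
  linarith

theorem card_nsmul_generationalSet_sub_le {c : ℕ} (hc : 0 < c) (hK : 0 ≤ K) (hKn : K + 1 ≤ n)
    (hW : 0 ≤ W) (hWn : 2 * W ≤ n) :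
    (#(c • generationalSet K W n - c • generationalSet K W n) : ℤ)
      ≤ 2 * (2 * (c * n) - W + 1 + #(c • ({0, K, K + 1} : Finset ℤ)))
        + (2 * c - 1) * (2 * (c * n) + 1) := by
  unfold generationalSet
  set T : Finset ℤ := {0, K, K + 1}
  have hT0 : (0 : ℤ) ∈ T := by simp [T]
  have hT : T ⊆ Icc 0 n := by simp [T, insert_subset_iff]; omega
  have hL : T ∪ Icc W n ⊆ Icc 0 n := union_subset hT (Icc_subset_Icc hW le_rfl)
  have hR : insert n (Icc 0 (n - W)) ⊆ Icc 0 n :=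
    insert_subset (by simp; omega) (Icc_subset_Icc le_rfl (by omega))
  have hrow : ∀ i ≤ c, i • insert n (Icc 0 (n - W)) + (c - i) • (T ∪ Icc W n) ⊆ Icc 0 (c * n) :=
    fun i hi x hx => by
      obtain ⟨y, hy, z, hz, rfl⟩ := mem_add.1 hx
      have := mem_Icc.1 (nsmul_subset_Icc_mul hR i hy)
      have := mem_Icc.1 (nsmul_subset_Icc_mul hL (c - i) hz)
      have : (i : ℤ) * n + ((c - i : ℕ) : ℤ) * n = c * n := by push_cast [Nat.cast_sub hi]; ring
      rw [mem_Icc]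
      omega
  have hD := card_nsmul_twoRowSet_sub_le (J := Icc (-(c * n)) (c * n)) fun i hi j hj x hx => by
    obtain ⟨y, hy, z, hz, rfl⟩ := mem_sub.1 hx
    have := mem_Icc.1 (hrow i hi hy)
    have := mem_Icc.1 (hrow j hj hz)
    rw [mem_Icc]
    omega
  have hdiff : #(c • insert n (Icc 0 (n - W)) - c • (T ∪ Icc W n))
      ≤ #(Icc (-(c * n)) (c * n - W)) + #(c • T) := by
    rw [nsmul_insert_Icc hW hWn hc, nsmul_union_Icc hT0 hT hW hWn hc]
    exact (card_le_card (insert_Icc_sub_union_Icc_subset (nsmul_subset_Icc_mul hT c) hW)).trans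
      ((card_union_le _ _).trans (Nat.add_le_add_left card_image_le _))
  have hmn : n ≤ c * n := le_mul_of_one_le_left (by omega) (by exact_mod_cast hc)
  rw [Int.card_Icc] at hD hdiff
  zify [show 1 ≤ 2 * c by omega] at hD hdiff
  rw [show (((c * n + 1 - -(c * n)).toNat : ℕ) : ℤ) = 2 * (c * n) + 1 by omega] at hD
  rw [show (((c * n - W + 1 - -(c * n)).toNat : ℕ) : ℤ) = 2 * (c * n) - W + 1 by omega] at hdiff
  linarith

theorem card_nsmul_generationalSet_sub_lt_add {c : ℕ} (hc : 0 < c) (hcK : 2 * c ≤ K)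
    (hKW : 2 * c * (K + 1) < W) (hWn : 2 * W ≤ n) :
    #(c • generationalSet K W n - c • generationalSet K W n)
      < #(c • generationalSet K W n + c • generationalSet K W n) := by
  rw [← add_nsmul, ← two_mul]
  have hK : 0 ≤ K := by omega
  have hc1 : (1 : ℤ) ≤ c := by exact_mod_cast hc
  have hsum := card_nsmul_generationalSet_ge (m := 2 * c) (by omega) hK (by push_cast; linarith) hWn
  have hdiff := card_nsmul_generationalSet_sub_le hc hK (by nlinarith) (by nlinarith) hWn
  have htri := two_mul_card_nsmul_triple_le hc hcK
  push_cast at hsum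
  zify at htri ⊢
  linarith

end GenerationalSet

theorem stmt8_general (k : ℕ) :
    ∃ A : Finset (ℤ × ℤ), ∀ c : ℕ, 1 ≤ c → c ≤ k →
      (iterSum c A - iterSum c A).card < (iterSum c A + iterSum c A).card := by
  refine ⟨generationalSet (2 * k) (2 * k * (2 * k + 1) + 1) (2 * (2 * k * (2 * k + 1) + 1)),
    fun c hc hck => ?_⟩
  have hck' : (c : ℤ) ≤ k := by exact_mod_cast hck
  rw [iterSum_eq_nsmul]
  exact card_nsmul_generationalSet_sub_lt_add hc (by omega) (by nlinarith) le_rfl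

theorem stmt8 (k : ℕ) (hk : 1 ≤ k) :
    ∃ A : Finset (ℤ × ℤ), ∀ c : ℕ, 1 ≤ c → c ≤ k →
      (iterSum c A - iterSum c A).card < (iterSum c A + iterSum c A).card :=
  stmt8_general k
end

section
/- Let A = {(a₁, b₁), (a₂, b₂), …, (a_m, b_m)} ⊆ ℕ₀² be a finite set of lattice points with non-negative coordinates. Let a be the smallest non-zero value among the a_i, let a' be the largest a_i, let b be the smallest non-zero value among the b_i, let b' be the largest b_i, and set N = max{2a'², 2b'²}. Suppose gcd(a, a') = 1, gcd(b, b') = 1, and {(0,0), (a,0), (0,b), (a',0), (0,b'), (a,b), (a,b'), (a',b), (a',b')} ⊆ A. Then there exist integers ℓ, ℓ₁, ℓ₂ such that for all k ≥ N, |kA| = k²a'b' − ℓ − ℓ₁a'k − ℓ₂b'k. -/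
open Pointwise

namespace St10

open Finset

/-- multiset characterization of iterSum membership -/
lemma mem_iterSum_iff {B : Finset (ℤ × ℤ)} {n : ℕ} {p : ℤ × ℤ} :
    p ∈ iterSum n B ↔
      ∃ m : Multiset (ℤ × ℤ), (∀ q ∈ m, q ∈ B) ∧ Multiset.card m = n ∧ m.sum = p := by
  induction n generalizing p with
  | zero =>
    simp only [iterSum, Finset.mem_singleton]
    constructor
    · rintro rfl; exact ⟨0, by simp, by simp, by simp⟩
    · rintro ⟨m, _, hc, hs⟩
      rw [Multiset.card_eq_zero] at hc; subst hc; simpa using hs.symm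
  | succ n ih =>
    simp only [iterSum, Finset.mem_add]
    constructor
    · rintro ⟨u, hu, v, hv, rfl⟩
      obtain ⟨m, hm, hc, hs⟩ := ih.1 hv
      refine ⟨u ::ₘ m, ?_, by simp [hc], by simp [hs]⟩
      intro q hq
      rcases Multiset.mem_cons.1 hq with rfl | h
      exacts [hu, hm q h]
    · rintro ⟨m, hm, hc, hs⟩
      have hne : m ≠ 0 := by
        intro h; subst h; simp at hc
      obtain ⟨u, hu⟩ := Multiset.exists_mem_of_ne_zero hne
      refine ⟨u, hm u hu, (m.erase u).sum, ?_, ?_⟩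
      · refine ih.2 ⟨m.erase u, fun q hq => hm q (Multiset.mem_of_mem_erase hq), ?_, rfl⟩
        have := Multiset.card_erase_of_mem hu
        rw [this, hc]; rfl
      · rw [← hs, ← Multiset.sum_cons, Multiset.cons_erase hu]

lemma multiset_mem_iterSum {B : Finset (ℤ × ℤ)} {m : Multiset (ℤ × ℤ)}
    (hm : ∀ q ∈ m, q ∈ B) : m.sum ∈ iterSum (Multiset.card m) B :=
  mem_iterSum_iff.2 ⟨m, hm, rfl, rfl⟩

lemma mem_iterSum_add {B : Finset (ℤ × ℤ)} {m n : ℕ} {p q : ℤ × ℤ}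
    (hp : p ∈ iterSum m B) (hq : q ∈ iterSum n B) : p + q ∈ iterSum (m + n) B := by
  obtain ⟨mp, h1, h2, h3⟩ := mem_iterSum_iff.1 hp
  obtain ⟨mq, g1, g2, g3⟩ := mem_iterSum_iff.1 hq
  refine mem_iterSum_iff.2 ⟨mp + mq, ?_, by simp [h2, g2], by simp [h3, g3]⟩
  intro x hx; rcases Multiset.mem_add.1 hx with h | h; exacts [h1 x h, g1 x h]

lemma mem_iterSum_pad {B : Finset (ℤ × ℤ)} (h0 : ((0:ℤ),(0:ℤ)) ∈ B) {m k : ℕ}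
    {p : ℤ × ℤ} (hp : p ∈ iterSum m B) (hmk : m ≤ k) : p ∈ iterSum k B := by
  obtain ⟨mp, h1, h2, h3⟩ := mem_iterSum_iff.1 hp
  refine mem_iterSum_iff.2 ⟨mp + Multiset.replicate (k - m) ((0:ℤ),(0:ℤ)), ?_, ?_, ?_⟩
  · intro q hq
    rcases Multiset.mem_add.1 hq with h | h
    · exact h1 q h
    · rw [Multiset.eq_of_mem_replicate h]; exact h0
  · simp [h2, Multiset.card_replicate]; omega
  · simp [h3, Multiset.sum_replicate]

/-- the "total semigroup" -/
def Lam (B : Finset (ℤ × ℤ)) (p : ℤ × ℤ) : Prop := ∃ r : ℕ, p ∈ iterSum r B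

lemma Lam.add {B : Finset (ℤ × ℤ)} {p q : ℤ × ℤ} (hp : Lam B p) (hq : Lam B q) :
    Lam B (p + q) := by
  obtain ⟨m, hm⟩ := hp; obtain ⟨n, hn⟩ := hq; exact ⟨m + n, mem_iterSum_add hm hn⟩

lemma iterSum_box {B : Finset (ℤ × ℤ)} {a' b' : ℤ}
    (hbox : ∀ p ∈ B, 0 ≤ p.1 ∧ p.1 ≤ a' ∧ 0 ≤ p.2 ∧ p.2 ≤ b') {n : ℕ} {p : ℤ × ℤ}
    (hp : p ∈ iterSum n B) : 0 ≤ p.1 ∧ p.1 ≤ n * a' ∧ 0 ≤ p.2 ∧ p.2 ≤ n * b' := by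
  induction n generalizing p with
  | zero => simp only [iterSum, Finset.mem_singleton] at hp; subst hp; norm_num
  | succ n ih =>
    rw [iterSum, Finset.mem_add] at hp
    obtain ⟨u, hu, v, hv, rfl⟩ := hp
    obtain ⟨h1, h2, h3, h4⟩ := hbox u hu
    obtain ⟨g1, g2, g3, g4⟩ := ih hv
    refine ⟨by simpa using add_nonneg h1 g1, ?_, by simpa using add_nonneg h3 g3, ?_⟩ <;>
      · simp only [Prod.fst_add, Prod.snd_add]; push_cast; nlinarith

lemma lam_nonneg {B : Finset (ℤ × ℤ)} {a' b' : ℤ}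
    (hbox : ∀ p ∈ B, 0 ≤ p.1 ∧ p.1 ≤ a' ∧ 0 ≤ p.2 ∧ p.2 ≤ b') {p : ℤ × ℤ}
    (hp : Lam B p) : 0 ≤ p.1 ∧ 0 ≤ p.2 := by
  obtain ⟨r, hr⟩ := hp
  obtain ⟨h1, _, h3, _⟩ := iterSum_box hbox hr
  exact ⟨h1, h3⟩

/-- Frobenius representation. -/
lemma frob {α a' : ℤ} (hα : 0 < α) (ha' : 0 < a') (hco : IsCoprime α a') {n : ℤ}
    (hn : (α - 1) * (a' - 1) ≤ n) :
    ∃ c₁ c₂ : ℕ, (c₁ : ℤ) ≤ a' - 1 ∧ (c₂ : ℤ) * a' ≤ n ∧ n = c₁ * α + c₂ * a' := by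
  obtain ⟨u, v, huv⟩ := hco
  set c1 : ℤ := (n * u) % a' with hc1
  have hc1nn : 0 ≤ c1 := Int.emod_nonneg _ (by positivity)
  have hc1lt : c1 < a' := Int.emod_lt_of_pos _ ha'
  have hdvd : a' ∣ n - c1 * α := by
    have h1 : c1 = n * u - a' * (n * u / a') := Int.emod_def (n * u) a'
    have h2 : n - c1 * α = n * (1 - u * α) + a' * (n * u / a') * α := by rw [h1]; ring
    have h3 : 1 - u * α = v * a' := by linarith [huv]
    rw [h2, h3]
    exact ⟨n * v + n * u / a' * α, by ring⟩
  obtain ⟨c2, hc2⟩ := hdvd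
  have hc2nn : 0 ≤ c2 := by
    by_contra h
    push_neg at h
    have : c2 ≤ -1 := by omega
    have h4 : n - c1 * α ≤ -a' := by
      calc n - c1 * α = a' * c2 := hc2
        _ ≤ a' * (-1) := by exact mul_le_mul_of_nonneg_left this (le_of_lt ha')
        _ = -a' := by ring
    have h5 : c1 * α ≤ (a' - 1) * α := by
      apply mul_le_mul_of_nonneg_right (by omega) (le_of_lt hα)
    nlinarith
  refine ⟨c1.toNat, c2.toNat, ?_, ?_, ?_⟩
  · rw [Int.toNat_of_nonneg hc1nn]; omega
  · rw [Int.toNat_of_nonneg hc2nn]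
    have h5 : 0 ≤ c1 * α := mul_nonneg hc1nn (le_of_lt hα)
    nlinarith [hc2]
  · rw [Int.toNat_of_nonneg hc1nn, Int.toNat_of_nonneg hc2nn]
    nlinarith [hc2]

/-- hypotheses bundle for a "quadrant set" -/
structure Good (B : Finset (ℤ × ℤ)) (α a' β b' : ℤ) : Prop where
  hα : 0 < α
  hαa : α ≤ a'
  hβ : 0 < β
  hβb : β ≤ b'
  coa : IsCoprime α a'
  cob : IsCoprime β b'
  box : ∀ p ∈ B, 0 ≤ p.1 ∧ p.1 ≤ a' ∧ 0 ≤ p.2 ∧ p.2 ≤ b'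
  grid : ∀ x ∈ ({0, α, a'} : Finset ℤ), ∀ y ∈ ({0, β, b'} : Finset ℤ), (x, y) ∈ B

lemma Good.ha' {B α a' β b'} (g : Good B α a' β b') : (0:ℤ) < a' := lt_of_lt_of_le g.hα g.hαa
lemma Good.hb' {B α a' β b'} (g : Good B α a' β b') : (0:ℤ) < b' := lt_of_lt_of_le g.hβ g.hβb

lemma Good.zero_mem {B α a' β b'} (g : Good B α a' β b') : ((0:ℤ),(0:ℤ)) ∈ B :=
  g.grid 0 (by simp) 0 (by simp)

/-- either α ≤ a' - 1 or a' = 1 -/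
lemma Good.alpha_lt {B α a' β b'} (g : Good B α a' β b') : α ≤ a' - 1 ∨ a' = 1 := by
  rcases eq_or_lt_of_le g.hαa with h | h
  · right
    subst h
    have := (IsCoprime.isUnit_of_dvd' g.coa dvd_rfl dvd_rfl)
    have := Int.isUnit_iff.1 this
    rcases this with h | h
    · exact h
    · exfalso; have := g.hα; omega
  · left; omega

lemma Good.beta_lt {B α a' β b'} (g : Good B α a' β b') : β ≤ b' - 1 ∨ b' = 1 := by
  rcases eq_or_lt_of_le g.hβb with h | h
  · right
    subst h
    have := (IsCoprime.isUnit_of_dvd' g.cob dvd_rfl dvd_rfl)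
    have := Int.isUnit_iff.1 this
    rcases this with h | h
    · exact h
    · exfalso; have := g.hβ; omega
  · left; omega
/-- paired grid representation: the key "max economics" lemma -/
lemma gridRep {B : Finset (ℤ × ℤ)} {α a' β b' : ℤ}
    (hgrid : ∀ x ∈ ({0, α, a'} : Finset ℤ), ∀ y ∈ ({0, β, b'} : Finset ℤ), (x, y) ∈ B) :
    ∀ (m c₁ c₂ d₁ d₂ : ℕ), c₁ + c₂ ≤ m → d₁ + d₂ ≤ m →
      (((c₁ : ℤ) * α + (c₂ : ℤ) * a', (d₁ : ℤ) * β + (d₂ : ℤ) * b') : ℤ × ℤ) ∈ iterSum m B := by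
  intro m
  induction m with
  | zero =>
    intro c₁ c₂ d₁ d₂ h1 h2
    have : c₁ = 0 ∧ c₂ = 0 ∧ d₁ = 0 ∧ d₂ = 0 := by omega
    obtain ⟨rfl, rfl, rfl, rfl⟩ := this
    simp [iterSum]
  | succ m ih =>
    intro c₁ c₂ d₁ d₂ h1 h2
    have hx : ∃ (ξ : ℤ) (c₁' c₂' : ℕ), ξ ∈ ({0, α, a'} : Finset ℤ) ∧
        (c₁' : ℤ) * α + (c₂' : ℤ) * a' + ξ = (c₁ : ℤ) * α + (c₂ : ℤ) * a' ∧ c₁' + c₂' ≤ m := by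
      rcases c₁ with _ | c₁'
      · rcases c₂ with _ | c₂'
        · exact ⟨0, 0, 0, by simp, by push_cast; ring, by omega⟩
        · exact ⟨a', 0, c₂', by simp, by push_cast; ring, by omega⟩
      · exact ⟨α, c₁', c₂, by simp, by push_cast; ring, by omega⟩
    have hy : ∃ (η : ℤ) (d₁' d₂' : ℕ), η ∈ ({0, β, b'} : Finset ℤ) ∧
        (d₁' : ℤ) * β + (d₂' : ℤ) * b' + η = (d₁ : ℤ) * β + (d₂ : ℤ) * b' ∧ d₁' + d₂' ≤ m := by
      rcases d₁ with _ | d₁'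
      · rcases d₂ with _ | d₂'
        · exact ⟨0, 0, 0, by simp, by push_cast; ring, by omega⟩
        · exact ⟨b', 0, d₂', by simp, by push_cast; ring, by omega⟩
      · exact ⟨β, d₁', d₂, by simp, by push_cast; ring, by omega⟩
    obtain ⟨ξ, c₁', c₂', hξ, hxe, hxle⟩ := hx
    obtain ⟨η, d₁', d₂', hη, hye, hyle⟩ := hy
    rw [iterSum, Finset.mem_add]
    refine ⟨(ξ, η), hgrid ξ hξ η hη,
      ((c₁' : ℤ) * α + (c₂' : ℤ) * a', (d₁' : ℤ) * β + (d₂' : ℤ) * b'), ih c₁' c₂' d₁' d₂' hxle hyle, ?_⟩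
    rw [Prod.ext_iff]
    constructor <;> simp <;> linarith [hxe, hye]

/-- swap transport -/
lemma mem_iterSum_swap {B : Finset (ℤ × ℤ)} {n : ℕ} {x y : ℤ} :
    ((x, y) : ℤ × ℤ) ∈ iterSum n (B.image (fun p => (p.2, p.1))) ↔ ((y, x) : ℤ × ℤ) ∈ iterSum n B := by
  induction n generalizing x y with
  | zero =>
    simp only [iterSum, Finset.mem_singleton, Prod.ext_iff]
    constructor <;> (rintro ⟨h1, h2⟩; exact ⟨h2, h1⟩)
  | succ n ih =>
    simp only [iterSum, Finset.mem_add]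
    constructor
    · rintro ⟨u, hu, v, hv, huv⟩
      obtain ⟨q, hq, rfl⟩ := Finset.mem_image.1 hu
      have h1 := congrArg Prod.fst huv
      have h2 := congrArg Prod.snd huv
      simp at h1 h2
      refine ⟨q, hq, (v.2, v.1), (ih (x := v.1) (y := v.2)).1 (by simpa using hv), ?_⟩
      refine Prod.ext ?_ ?_ <;> simp at h1 h2 ⊢ <;> linarith
    · rintro ⟨u, hu, v, hv, huv⟩
      have h1 := congrArg Prod.fst huv
      have h2 := congrArg Prod.snd huv
      simp at h1 h2
      refine ⟨(u.2, u.1), Finset.mem_image.2 ⟨u, hu, rfl⟩, (v.2, v.1), ih.2 (by simpa using hv), ?_⟩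
      refine Prod.ext ?_ ?_ <;> simp at h1 h2 ⊢ <;> linarith

/-- x-reflection transport -/
lemma mem_iterSum_reflX {B : Finset (ℤ × ℤ)} {a' : ℤ} {n : ℕ} {x y : ℤ} :
    ((x, y) : ℤ × ℤ) ∈ iterSum n (B.image (fun p => (a' - p.1, p.2))) ↔
      (((n : ℤ) * a' - x, y) : ℤ × ℤ) ∈ iterSum n B := by
  induction n generalizing x y with
  | zero =>
    simp only [iterSum, Finset.mem_singleton, Prod.ext_iff]
    constructor <;> (rintro ⟨h1, h2⟩; simp at h1 h2 ⊢; constructor <;> push_cast <;> linarith)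
  | succ n ih =>
    simp only [iterSum, Finset.mem_add]
    constructor
    · rintro ⟨u, hu, v, hv, huv⟩
      obtain ⟨q, hq, rfl⟩ := Finset.mem_image.1 hu
      have h1 := congrArg Prod.fst huv
      have h2 := congrArg Prod.snd huv
      simp at h1 h2
      refine ⟨q, hq, ((n : ℤ) * a' - v.1, v.2), (ih (x := v.1) (y := v.2)).1 (by simpa using hv), ?_⟩
      refine Prod.ext ?_ ?_ <;> simp at h1 h2 ⊢ <;> push_cast <;> linarith
    · rintro ⟨u, hu, v, hv, huv⟩
      have h1 := congrArg Prod.fst huv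
      have h2 := congrArg Prod.snd huv
      simp at h1 h2
      refine ⟨(a' - u.1, u.2), Finset.mem_image.2 ⟨u, hu, rfl⟩, (x - (a' - u.1), y - u.2), ?_, ?_⟩
      · refine ih.2 ?_
        have hv1 : v.1 = (n : ℤ) * a' - (x - (a' - u.1)) := by push_cast at h1; linarith
        have hv2 : v.2 = y - u.2 := by linarith
        rw [← hv1, ← hv2]
        exact hv
      · refine Prod.ext ?_ ?_ <;> simp

/-- y-reflection transport -/
lemma mem_iterSum_reflY {B : Finset (ℤ × ℤ)} {b' : ℤ} {n : ℕ} {x y : ℤ} :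
    ((x, y) : ℤ × ℤ) ∈ iterSum n (B.image (fun p => (p.1, b' - p.2))) ↔
      ((x, (n : ℤ) * b' - y) : ℤ × ℤ) ∈ iterSum n B := by
  induction n generalizing x y with
  | zero =>
    simp only [iterSum, Finset.mem_singleton, Prod.ext_iff]
    constructor <;> (rintro ⟨h1, h2⟩; simp at h1 h2 ⊢; constructor <;> push_cast <;> linarith)
  | succ n ih =>
    simp only [iterSum, Finset.mem_add]
    constructor
    · rintro ⟨u, hu, v, hv, huv⟩
      obtain ⟨q, hq, rfl⟩ := Finset.mem_image.1 hu
      have h1 := congrArg Prod.fst huv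
      have h2 := congrArg Prod.snd huv
      simp at h1 h2
      refine ⟨q, hq, (v.1, (n : ℤ) * b' - v.2), (ih (x := v.1) (y := v.2)).1 (by simpa using hv), ?_⟩
      refine Prod.ext ?_ ?_ <;> simp at h1 h2 ⊢ <;> push_cast <;> linarith
    · rintro ⟨u, hu, v, hv, huv⟩
      have h1 := congrArg Prod.fst huv
      have h2 := congrArg Prod.snd huv
      simp at h1 h2
      refine ⟨(u.1, b' - u.2), Finset.mem_image.2 ⟨u, hu, rfl⟩, (x - u.1, y - (b' - u.2)), ?_, ?_⟩
      · refine ih.2 ?_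
        have hv1 : v.1 = x - u.1 := by linarith
        have hv2 : v.2 = (n : ℤ) * b' - (y - (b' - u.2)) := by push_cast at h2; linarith
        rw [← hv1, ← hv2]
        exact hv
      · refine Prod.ext ?_ ?_ <;> simp
lemma Good.swap {B : Finset (ℤ × ℤ)} {α a' β b' : ℤ} (g : Good B α a' β b') :
    Good (B.image (fun p => (p.2, p.1))) β b' α a' := by
  refine ⟨g.hβ, g.hβb, g.hα, g.hαa, g.cob, g.coa, ?_, ?_⟩
  · intro p hp
    obtain ⟨q, hq, rfl⟩ := Finset.mem_image.1 hp
    obtain ⟨h1, h2, h3, h4⟩ := g.box q hq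
    exact ⟨h3, h4, h1, h2⟩
  · intro x hx y hy
    exact Finset.mem_image.2 ⟨(y, x), g.grid y hy x hx, rfl⟩

lemma Good.reflX {B : Finset (ℤ × ℤ)} {α a' β b' : ℤ} (g : Good B α a' β b') :
    Good (B.image (fun p => (a' - p.1, p.2))) (if a' - α = 0 then a' else a' - α) a' β b' := by
  have ha' := g.ha'
  have hαa := g.hαa
  have hα := g.hα
  refine ⟨?_, ?_, g.hβ, g.hβb, ?_, g.cob, ?_, ?_⟩
  · split_ifs <;> omega
  · split_ifs <;> omega
  · split_ifs with h
    · have : α = a' := by omega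
      subst this; exact g.coa
    · obtain ⟨u, v, huv⟩ := g.coa
      exact ⟨-u, u + v, by ring_nf; linarith [huv]⟩
  · intro p hp
    obtain ⟨q, hq, rfl⟩ := Finset.mem_image.1 hp
    obtain ⟨h1, h2, h3, h4⟩ := g.box q hq
    exact ⟨by simp; omega, by simp; omega, h3, h4⟩
  · intro x hx y hy
    simp only [Finset.mem_insert, Finset.mem_singleton] at hx
    rcases hx with rfl | rfl | rfl
    · exact Finset.mem_image.2 ⟨(a', y), g.grid a' (by simp) y hy, by simp⟩
    · split_ifs with h
      · exact Finset.mem_image.2 ⟨(0, y), g.grid 0 (by simp) y hy, by simp⟩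
      · exact Finset.mem_image.2 ⟨(α, y), g.grid α (by simp) y hy, by simp⟩
    · exact Finset.mem_image.2 ⟨(0, y), g.grid 0 (by simp) y hy, by simp⟩

lemma Good.reflY {B : Finset (ℤ × ℤ)} {α a' β b' : ℤ} (g : Good B α a' β b') :
    Good (B.image (fun p => (p.1, b' - p.2))) α a' (if b' - β = 0 then b' else b' - β) b' := by
  have hb' := g.hb'
  have hβb := g.hβb
  have hβ := g.hβ
  refine ⟨g.hα, g.hαa, ?_, ?_, g.coa, ?_, ?_, ?_⟩
  · split_ifs <;> omega
  · split_ifs <;> omega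
  · split_ifs with h
    · have : β = b' := by omega
      subst this; exact g.cob
    · obtain ⟨u, v, huv⟩ := g.cob
      exact ⟨-u, u + v, by ring_nf; linarith [huv]⟩
  · intro p hp
    obtain ⟨q, hq, rfl⟩ := Finset.mem_image.1 hp
    obtain ⟨h1, h2, h3, h4⟩ := g.box q hq
    exact ⟨h1, h2, by simp; omega, by simp; omega⟩
  · intro x hx y hy
    simp only [Finset.mem_insert, Finset.mem_singleton] at hy
    rcases hy with rfl | rfl | rfl
    · exact Finset.mem_image.2 ⟨(x, b'), g.grid x hx b' (by simp), by simp⟩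
    · split_ifs with h
      · exact Finset.mem_image.2 ⟨(x, 0), g.grid x hx 0 (by simp), by simp⟩
      · exact Finset.mem_image.2 ⟨(x, β), g.grid x hx β (by simp), by simp⟩
    · exact Finset.mem_image.2 ⟨(x, 0), g.grid x hx 0 (by simp), by simp⟩

lemma msum_fst (m : Multiset (ℤ × ℤ)) : m.sum.1 = (m.map Prod.fst).sum := by
  induction m using Multiset.induction_on with
  | empty => simp
  | cons a s ih => simp [ih]

lemma msum_snd (m : Multiset (ℤ × ℤ)) : m.sum.2 = (m.map Prod.snd).sum := by
  induction m using Multiset.induction_on with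
  | empty => simp
  | cons a s ih => simp [ih]

lemma msum_le {m : Multiset ℤ} {c : ℤ} (h : ∀ t ∈ m, c ≤ t) :
    (Multiset.card m : ℤ) * c ≤ m.sum := by
  have := Multiset.card_nsmul_le_sum h
  simpa [nsmul_eq_mul] using this

lemma msum_ge {m : Multiset ℤ} {c : ℤ} (h : ∀ t ∈ m, t ≤ c) :
    m.sum ≤ (Multiset.card m : ℤ) * c := by
  have := Multiset.sum_le_card_nsmul m c h
  simpa [nsmul_eq_mul] using this
/-- Low horizontal strip: a `Λ`-point with small `y` and `x` at most `k a'/2` is in `kA`. -/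
lemma lowStrip {B : Finset (ℤ × ℤ)} {α a' β b' M : ℤ} (g : Good B α a' β b')
    (haM : a' ≤ M) (hbM : b' ≤ M) {k : ℕ} (hk : 2 * M ^ 2 ≤ (k : ℤ))
    {x y : ℤ} (hx : 2 * x ≤ (k : ℤ) * a') (hy : y ≤ (β - 1) * (b' - 1) - 1)
    (hlam : Lam B (x, y)) : ((x, y) : ℤ × ℤ) ∈ iterSum k B := by
  classical
  have ha' := g.ha'
  have hb' := g.hb'
  have hα := g.hα
  have hβ := g.hβ
  have hM1 : (1 : ℤ) ≤ M := by linarith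
  obtain ⟨r, hr⟩ := hlam
  obtain ⟨m, hmB, hmc, hms⟩ := mem_iterSum_iff.1 hr
  set mp := m.filter (fun p => 0 < p.2) with hmp
  set m0 := m.filter (fun p => ¬ 0 < p.2) with hm0
  have hsplit : mp + m0 = m := Multiset.filter_add_not _ m
  -- snd of m0 elements is 0
  have hm0y : ∀ q ∈ m0, q.2 = 0 := by
    intro q hq
    have h1 := (Multiset.mem_filter.1 hq).2
    have h2 := g.box q (hmB q (Multiset.mem_of_mem_filter hq))
    omega
  have hm0sum2 : m0.sum.2 = 0 := by
    rw [msum_snd]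
    apply Multiset.sum_eq_zero
    intro z hz
    obtain ⟨q, hq, rfl⟩ := Multiset.mem_map.1 hz
    exact hm0y q hq
  have hmpsum2 : mp.sum.2 = y := by
    have : (mp + m0).sum = (x, y) := by rw [hsplit]; exact hms
    have h2 := congrArg Prod.snd this
    simp only [Multiset.sum_add, Prod.snd_add] at h2
    omega
  -- card mp ≤ y
  have hcard_mp : (Multiset.card mp : ℤ) ≤ y := by
    have h1 : (Multiset.card (mp.map Prod.snd) : ℤ) * 1 ≤ (mp.map Prod.snd).sum := by
      apply msum_le
      intro t ht
      obtain ⟨q, hq, rfl⟩ := Multiset.mem_map.1 ht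
      have := (Multiset.mem_filter.1 hq).2
      omega
    rw [Multiset.card_map] at h1
    rw [msum_snd] at hmpsum2
    omega
  set x₂ := mp.sum.1 with hx₂
  have hx₂nn : 0 ≤ x₂ := by
    rw [hx₂, msum_fst]
    have := msum_le (m := mp.map Prod.fst) (c := 0) ?_
    · simpa using this
    · intro t ht
      obtain ⟨q, hq, rfl⟩ := Multiset.mem_map.1 ht
      exact (g.box q (hmB q (Multiset.mem_of_mem_filter hq))).1
  have hm0sum1 : m0.sum.1 = x - x₂ := by
    have h0 : (mp + m0).sum = (x, y) := by rw [hsplit]; exact hms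
    have h2 := congrArg Prod.fst h0
    simp only [Multiset.sum_add, Prod.fst_add] at h2
    have h3 : mp.sum.1 + m0.sum.1 = x := h2
    omega
  set xr := x - x₂ with hxr
  have hxrnn : 0 ≤ xr := by
    rw [← hm0sum1, msum_fst]
    have := msum_le (m := m0.map Prod.fst) (c := 0) ?_
    · simpa using this
    · intro t ht
      obtain ⟨q, hq, rfl⟩ := Multiset.mem_map.1 ht
      exact (g.box q (hmB q (Multiset.mem_of_mem_filter hq))).1
  have hmpmem : mp.sum ∈ iterSum (Multiset.card mp) B :=
    multiset_mem_iterSum (fun q hq => hmB q (Multiset.mem_of_mem_filter hq))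
  have hmp_pair : mp.sum = ((x₂, y) : ℤ × ℤ) := Prod.ext hx₂.symm hmpsum2
  -- bounds on Fy
  have hFyM : (β - 1) * (b' - 1) ≤ (M - 2) * (M - 1) := by
    rcases g.beta_lt with h | h
    · have h1 : β - 1 ≤ M - 2 := by linarith
      have h2 : b' - 1 ≤ M - 1 := by linarith
      have h3 : (0:ℤ) ≤ b' - 1 := by linarith
      have h4 : (0:ℤ) ≤ β - 1 := by linarith
      nlinarith only [h1, h2, h3, h4]
    · subst h
      simp
      rcases le_or_gt 2 M with h2 | h2
      · exact mul_nonneg (by linarith) (by linarith)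
      · have := mul_pos_of_neg_of_neg (a := M - 2) (b := M - 1) (by linarith) (by linarith)
        linarith
  by_cases hxrF : (α - 1) * (a' - 1) ≤ xr
  · -- rewrite the x-remainder using Frobenius
    obtain ⟨c₁, c₂, hc₁, hc₂, heq⟩ := frob hα ha' g.coa hxrF
    have hgrid : ((xr, 0) : ℤ × ℤ) ∈ iterSum (c₁ + c₂) B := by
      have h1 := gridRep g.grid (c₁ + c₂) c₁ c₂ 0 0 le_rfl (by omega)
      have h2 : (((c₁:ℤ) * α + (c₂:ℤ) * a', ((0:ℕ):ℤ) * β + ((0:ℕ):ℤ) * b') : ℤ × ℤ)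
          = ((xr, 0) : ℤ × ℤ) := by
        refine Prod.ext ?_ ?_ <;> simp <;> linarith [heq]
      rwa [h2] at h1
    have htot : ((x, y) : ℤ × ℤ) ∈ iterSum (Multiset.card mp + (c₁ + c₂)) B := by
      have h1 := mem_iterSum_add hmpmem hgrid
      rw [hmp_pair] at h1
      have h2 : (((x₂, y) : ℤ × ℤ) + (xr, 0)) = ((x, y) : ℤ × ℤ) := by
        refine Prod.ext ?_ ?_ <;> simp <;> omega
      rwa [h2] at h1
    apply mem_iterSum_pad g.zero_mem htot
    -- budget
    have h2c₂ : 2 * (c₂ : ℤ) ≤ (k : ℤ) := by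
      have h1 : (2 * (c₂ : ℤ)) * a' ≤ (k : ℤ) * a' := by nlinarith only [hc₂, hx, hx₂nn, hxr]
      exact le_of_mul_le_mul_right h1 ha'
    have : (Multiset.card mp : ℤ) + (c₁ : ℤ) + (c₂ : ℤ) ≤ (k : ℤ) := by
      have hb1 : 2 * ((M - 2) * (M - 1)) + 2 * M ≤ 2 * M ^ 2 + 4 := by nlinarith only [hM1]
      have hb2 : 2 * ((β - 1) * (b' - 1)) + 2 * a' ≤ (k : ℤ) + 4 := by linarith
      omega
    have hfin : ((Multiset.card mp + (c₁ + c₂) : ℕ) : ℤ) ≤ (k : ℤ) := by push_cast; omega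
    exact_mod_cast hfin
  · -- keep the original zero-y points with positive x
    set m0' := m0.filter (fun p => 0 < p.1) with hm0'
    have hm0'sub : ∀ q ∈ m0', q ∈ B := fun q hq =>
      hmB q (Multiset.mem_of_mem_filter (Multiset.mem_of_mem_filter hq))
    have hrest : ∀ q ∈ m0.filter (fun p => ¬ 0 < p.1), q = (0, 0) := by
      intro q hq
      have h1 := (Multiset.mem_filter.1 hq).2
      have h2 := hm0y q (Multiset.mem_of_mem_filter hq)
      have h3 := g.box q (hmB q (Multiset.mem_of_mem_filter (Multiset.mem_of_mem_filter hq)))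
      have : q.1 = 0 := by omega
      exact Prod.ext this h2
    have hm0'sum : m0'.sum = ((xr, 0) : ℤ × ℤ) := by
      have hsp : m0' + m0.filter (fun p => ¬ 0 < p.1) = m0 := Multiset.filter_add_not _ m0
      have h1 : (m0.filter (fun p => ¬ 0 < p.1)).sum = (0 : ℤ × ℤ) := by
        apply Multiset.sum_eq_zero
        intro z hz
        rw [hrest z hz]; rfl
      have h2 : m0'.sum + (m0.filter (fun p => ¬ 0 < p.1)).sum = m0.sum := by
        rw [← Multiset.sum_add, hsp]
      rw [h1, add_zero] at h2
      refine Prod.ext ?_ ?_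
      · rw [h2, hm0sum1]
      · rw [h2, hm0sum2]
    have hcard_m0' : (Multiset.card m0' : ℤ) ≤ xr := by
      have h1 : (Multiset.card (m0'.map Prod.fst) : ℤ) * 1 ≤ (m0'.map Prod.fst).sum := by
        apply msum_le
        intro t ht
        obtain ⟨q, hq, rfl⟩ := Multiset.mem_map.1 ht
        have := (Multiset.mem_filter.1 hq).2
        omega
      rw [Multiset.card_map] at h1
      have h2 : (m0'.map Prod.fst).sum = xr := by rw [← msum_fst, hm0'sum]
      omega
    have htot : ((x, y) : ℤ × ℤ) ∈ iterSum (Multiset.card mp + Multiset.card m0') B := by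
      have h1 := mem_iterSum_add hmpmem (multiset_mem_iterSum hm0'sub)
      rw [hmp_pair, hm0'sum] at h1
      have h2 : (((x₂, y) : ℤ × ℤ) + (xr, 0)) = ((x, y) : ℤ × ℤ) := by
        refine Prod.ext ?_ ?_ <;> simp <;> omega
      rwa [h2] at h1
    apply mem_iterSum_pad g.zero_mem htot
    have hFxM : (α - 1) * (a' - 1) ≤ (M - 1) * (M - 1) := by
      have h1 : α - 1 ≤ M - 1 := by linarith [g.hαa]
      have h2 : a' - 1 ≤ M - 1 := by linarith
      have h3 : (0:ℤ) ≤ a' - 1 := by linarith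
      have h4 : (0:ℤ) ≤ α - 1 := by linarith
      nlinarith only [h1, h2, h3, h4]
    have hxrlt : xr + 1 ≤ (α - 1) * (a' - 1) := Int.lt_iff_add_one_le.mp (not_le.mp hxrF)
    have hb1 : (M - 2) * (M - 1) + (M - 1) * (M - 1) ≤ 2 * M ^ 2 := by nlinarith only [hM1]
    have : (Multiset.card mp : ℤ) + (Multiset.card m0' : ℤ) ≤ (k : ℤ) := by linarith
    have hfin : ((Multiset.card mp + Multiset.card m0' : ℕ) : ℤ) ≤ (k : ℤ) := by push_cast; omega
    exact_mod_cast hfin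
lemma lam_swap {B : Finset (ℤ × ℤ)} {x y : ℤ} :
    Lam (B.image (fun p => (p.2, p.1))) (x, y) ↔ Lam B (y, x) := by
  constructor
  · rintro ⟨r, hr⟩; exact ⟨r, mem_iterSum_swap.1 hr⟩
  · rintro ⟨r, hr⟩; exact ⟨r, mem_iterSum_swap.2 hr⟩

/-- The quarter lemma: in the lower-left (k/2)-quarter, `kA` agrees with `Λ`. -/
lemma quarter {B : Finset (ℤ × ℤ)} {α a' β b' M : ℤ} (g : Good B α a' β b')
    (haM : a' ≤ M) (hbM : b' ≤ M) {k : ℕ} (hk : 2 * M ^ 2 ≤ (k : ℤ))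
    {x y : ℤ} (hx : 2 * x ≤ (k : ℤ) * a') (hy : 2 * y ≤ (k : ℤ) * b') :
    ((x, y) : ℤ × ℤ) ∈ iterSum k B ↔ Lam B (x, y) := by
  constructor
  · exact fun h => ⟨k, h⟩
  intro hlam
  have ha' := g.ha'
  have hb' := g.hb'
  have hα := g.hα
  have hβ := g.hβ
  have hM1 : (1 : ℤ) ≤ M := by linarith
  by_cases h2 : y ≤ (β - 1) * (b' - 1) - 1
  · exact lowStrip g haM hbM hk hx h2 hlam
  by_cases h3 : x ≤ (α - 1) * (a' - 1) - 1
  · have gs := g.swap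
    have hls := lowStrip gs hbM haM hk hy h3 (lam_swap.2 hlam)
    exact mem_iterSum_swap.1 hls
  -- main case : both coordinates large
  push_neg at h2 h3
  obtain ⟨c₁, c₂, hc₁, hc₂, heqx⟩ := frob hα ha' g.coa (by linarith : (α - 1) * (a' - 1) ≤ x)
  obtain ⟨d₁, d₂, hd₁, hd₂, heqy⟩ := frob hβ hb' g.cob (by linarith : (β - 1) * (b' - 1) ≤ y)
  have hMM : 2 * M ≤ 2 * M ^ 2 := by nlinarith only [hM1]
  have h2c₂ : 2 * (c₂ : ℤ) ≤ (k : ℤ) := by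
    have h1 : (2 * (c₂ : ℤ)) * a' ≤ (k : ℤ) * a' := by nlinarith only [hc₂, hx]
    exact le_of_mul_le_mul_right h1 ha'
  have h2d₂ : 2 * (d₂ : ℤ) ≤ (k : ℤ) := by
    have h1 : (2 * (d₂ : ℤ)) * b' ≤ (k : ℤ) * b' := by nlinarith only [hd₂, hy]
    exact le_of_mul_le_mul_right h1 hb'
  have hcx : ((c₁ + c₂ : ℕ) : ℤ) ≤ (k : ℤ) := by push_cast; omega
  have hcy : ((d₁ + d₂ : ℕ) : ℤ) ≤ (k : ℤ) := by push_cast; omega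
  have hcx' : c₁ + c₂ ≤ k := by exact_mod_cast hcx
  have hcy' : d₁ + d₂ ≤ k := by exact_mod_cast hcy
  have hmem := gridRep g.grid k c₁ c₂ d₁ d₂ hcx' hcy'
  have hpt : (((c₁ : ℤ) * α + (c₂ : ℤ) * a', (d₁ : ℤ) * β + (d₂ : ℤ) * b') : ℤ × ℤ)
      = ((x, y) : ℤ × ℤ) := by
    refine Prod.ext ?_ ?_ <;> simp <;> linarith [heqx, heqy]
  rwa [hpt] at hmem
section Counting

open scoped Classical

/-- x-projection of the total semigroup -/
def Sp (B : Finset (ℤ × ℤ)) (x : ℤ) : Prop := ∃ y, Lam B (x, y)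
/-- y-projection of the total semigroup -/
def Tp (B : Finset (ℤ × ℤ)) (y : ℤ) : Prop := ∃ x, Lam B (x, y)

variable {B : Finset (ℤ × ℤ)} {α a' β b' M : ℤ}

lemma lam_ge (g : Good B α a' β b') {x y : ℤ}
    (hx : (α - 1) * (a' - 1) ≤ x) (hy : (β - 1) * (b' - 1) ≤ y) : Lam B (x, y) := by
  obtain ⟨c₁, c₂, hc₁, hc₂, heqx⟩ := frob g.hα g.ha' g.coa hx
  obtain ⟨d₁, d₂, hd₁, hd₂, heqy⟩ := frob g.hβ g.hb' g.cob hy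
  refine ⟨max (c₁ + c₂) (d₁ + d₂), ?_⟩
  have hmem := gridRep g.grid (max (c₁ + c₂) (d₁ + d₂)) c₁ c₂ d₁ d₂ (le_max_left _ _) (le_max_right _ _)
  have hpt : (((c₁ : ℤ) * α + (c₂ : ℤ) * a', (d₁ : ℤ) * β + (d₂ : ℤ) * b') : ℤ × ℤ)
      = ((x, y) : ℤ × ℤ) := by
    refine Prod.ext ?_ ?_ <;> simp <;> linarith [heqx, heqy]
  rwa [hpt] at hmem

lemma sp_of_ge (g : Good B α a' β b') {x : ℤ} (hx : (α - 1) * (a' - 1) ≤ x) : Sp B x := by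
  refine ⟨(β - 1) * (b' - 1), lam_ge g hx le_rfl⟩

lemma tp_of_ge (g : Good B α a' β b') {y : ℤ} (hy : (β - 1) * (b' - 1) ≤ y) : Tp B y := by
  refine ⟨(α - 1) * (a' - 1), lam_ge g le_rfl hy⟩

lemma sp_swap {x : ℤ} : Sp (B.image (fun p => (p.2, p.1))) x ↔ Tp B x := by
  constructor
  · rintro ⟨y, hy⟩; exact ⟨y, lam_swap.1 hy⟩
  · rintro ⟨y, hy⟩; exact ⟨y, lam_swap.2 hy⟩

lemma lam_nonneg' (g : Good B α a' β b') {p : ℤ × ℤ} (hp : Lam B p) : 0 ≤ p.1 ∧ 0 ≤ p.2 :=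
  lam_nonneg g.box hp

/-- column tail: above `θ = Fx b' + Fy`, every non-empty column is full. -/
lemma colTail (g : Good B α a' β b') {x y : ℤ} (hsp : Sp B x)
    (hy : (α - 1) * (a' - 1) * b' + (β - 1) * (b' - 1) ≤ y) : Lam B (x, y) := by
  classical
  have ha' := g.ha'
  have hb' := g.hb'
  have hα := g.hα
  have hβ := g.hβ
  have hFx : (0:ℤ) ≤ (α - 1) * (a' - 1) := mul_nonneg (by linarith) (by linarith)
  have hFy : (0:ℤ) ≤ (β - 1) * (b' - 1) := mul_nonneg (by linarith) (by linarith)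
  by_cases hxF : (α - 1) * (a' - 1) ≤ x
  · have h1 : Lam B (x, 0) := by
      have := lam_ge g hxF (le_rfl : (β-1)*(b'-1) ≤ (β-1)*(b'-1))
      -- we need (x, 0); instead build directly
      obtain ⟨c₁, c₂, hc₁, hc₂, heqx⟩ := frob g.hα g.ha' g.coa hxF
      refine ⟨c₁ + c₂, ?_⟩
      have hmem := gridRep g.grid (c₁ + c₂) c₁ c₂ 0 0 le_rfl (by omega)
      have hpt : (((c₁ : ℤ) * α + (c₂ : ℤ) * a', ((0:ℕ) : ℤ) * β + ((0:ℕ) : ℤ) * b') : ℤ × ℤ)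
          = ((x, 0) : ℤ × ℤ) := by
        refine Prod.ext ?_ ?_ <;> simp <;> linarith [heqx]
      rwa [hpt] at hmem
    have h2 : Lam B (0, y) := by
      obtain ⟨d₁, d₂, hd₁, hd₂, heqy⟩ := frob g.hβ g.hb' g.cob
        (by nlinarith only [hy, hFx, hb'] : (β - 1) * (b' - 1) ≤ y)
      refine ⟨d₁ + d₂, ?_⟩
      have hmem := gridRep g.grid (d₁ + d₂) 0 0 d₁ d₂ (by omega) le_rfl
      have hpt : ((((0:ℕ) : ℤ) * α + ((0:ℕ) : ℤ) * a', (d₁ : ℤ) * β + (d₂ : ℤ) * b') : ℤ × ℤ)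
          = ((0, y) : ℤ × ℤ) := by
        refine Prod.ext ?_ ?_ <;> simp <;> linarith [heqy]
      rwa [hpt] at hmem
    have := h1.add h2
    simpa using this
  · push_neg at hxF
    obtain ⟨y', r, hr⟩ := hsp
    obtain ⟨m, hmB, hmc, hms⟩ := mem_iterSum_iff.1 hr
    set mx := m.filter (fun p => 0 < p.1) with hmx
    have hmxB : ∀ q ∈ mx, q ∈ B := fun q hq => hmB q (Multiset.mem_of_mem_filter hq)
    have hrest0 : ∀ q ∈ m.filter (fun p => ¬ 0 < p.1), q.1 = 0 := by
      intro q hq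
      have h1 := (Multiset.mem_filter.1 hq).2
      have h2 := (g.box q (hmB q (Multiset.mem_of_mem_filter hq))).1
      omega
    have hmxsum1 : mx.sum.1 = x := by
      have hsp2 : mx + m.filter (fun p => ¬ 0 < p.1) = m := Multiset.filter_add_not _ m
      have h0 : (mx + m.filter (fun p => ¬ 0 < p.1)).sum = ((x, y') : ℤ × ℤ) := by
        rw [hsp2]; exact hms
      have h2 := congrArg Prod.fst h0
      simp only [Multiset.sum_add, Prod.fst_add] at h2
      have h3 : (m.filter (fun p => ¬ 0 < p.1)).sum.1 = 0 := by
        rw [msum_fst]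
        apply Multiset.sum_eq_zero
        intro z hz
        obtain ⟨q, hq, rfl⟩ := Multiset.mem_map.1 hz
        exact hrest0 q hq
      have h4 : mx.sum.1 + (m.filter (fun p => ¬ 0 < p.1)).sum.1 = x := h2
      omega
    set y₂ := mx.sum.2 with hy₂
    have hy₂nn : 0 ≤ y₂ := by
      rw [hy₂, msum_snd]
      have := msum_le (m := mx.map Prod.snd) (c := 0) ?_
      · simpa using this
      · intro t ht
        obtain ⟨q, hq, rfl⟩ := Multiset.mem_map.1 ht
        exact (g.box q (hmxB q hq)).2.2.1
    have hcard_mx : (Multiset.card mx : ℤ) ≤ x := by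
      have h1 : (Multiset.card (mx.map Prod.fst) : ℤ) * 1 ≤ (mx.map Prod.fst).sum := by
        apply msum_le
        intro t ht
        obtain ⟨q, hq, rfl⟩ := Multiset.mem_map.1 ht
        have := (Multiset.mem_filter.1 hq).2
        omega
      rw [Multiset.card_map] at h1
      rw [msum_fst] at hmxsum1
      omega
    have hy₂le : y₂ ≤ x * b' := by
      rw [hy₂, msum_snd]
      have h1 := msum_ge (m := mx.map Prod.snd) (c := b') ?_
      · rw [Multiset.card_map] at h1
        have h2 : (Multiset.card mx : ℤ) * b' ≤ x * b' := by
          apply mul_le_mul_of_nonneg_right hcard_mx (le_of_lt hb')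
        linarith
      · intro t ht
        obtain ⟨q, hq, rfl⟩ := Multiset.mem_map.1 ht
        exact (g.box q (hmxB q hq)).2.2.2
    have hlam1 : Lam B (x, y₂) := by
      refine ⟨Multiset.card mx, ?_⟩
      have := multiset_mem_iterSum hmxB
      have hpt : mx.sum = ((x, y₂) : ℤ × ℤ) := Prod.ext hmxsum1 rfl
      rwa [hpt] at this
    have hyF : (β - 1) * (b' - 1) ≤ y - y₂ := by nlinarith only [hy, hy₂le, hxF, hb']
    obtain ⟨d₁, d₂, hd₁, hd₂, heqy⟩ := frob g.hβ g.hb' g.cob hyF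
    have hlam2 : Lam B (0, y - y₂) := by
      refine ⟨d₁ + d₂, ?_⟩
      have hmem := gridRep g.grid (d₁ + d₂) 0 0 d₁ d₂ (by omega) le_rfl
      have hpt : ((((0:ℕ) : ℤ) * α + ((0:ℕ) : ℤ) * a', (d₁ : ℤ) * β + (d₂ : ℤ) * b') : ℤ × ℤ)
          = ((0, y - y₂) : ℤ × ℤ) := by
        refine Prod.ext ?_ ?_ <;> simp <;> linarith [heqy]
      rwa [hpt] at hmem
    have := hlam1.add hlam2
    have hpt : ((x, y₂) : ℤ × ℤ) + (0, y - y₂) = ((x, y) : ℤ × ℤ) := by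
      refine Prod.ext ?_ ?_ <;> simp
    rwa [hpt] at this

/-- row tail by symmetry -/
lemma rowTail (g : Good B α a' β b') {x y : ℤ} (htp : Tp B y)
    (hx : (β - 1) * (b' - 1) * a' + (α - 1) * (a' - 1) ≤ x) : Lam B (x, y) := by
  have := colTail g.swap (sp_swap.2 htp) hx
  exact lam_swap.1 this

end Counting
section Counting2

open scoped Classical
open Finset

noncomputable def uC (B : Finset (ℤ × ℤ)) (β b' : ℤ) : ℕ :=
  ((Icc (0:ℤ) ((β-1)*(b'-1)-1)).filter (fun y => ¬ Tp B y)).card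

noncomputable def gC (B : Finset (ℤ × ℤ)) (α a' : ℤ) : ℕ :=
  ((Icc (0:ℤ) ((α-1)*(a'-1)-1)).filter (fun x => ¬ Sp B x)).card

noncomputable def cInf (B : Finset (ℤ × ℤ)) (θ : ℤ) : ℕ :=
  ((Icc (0:ℤ) (θ-1)).filter (fun y => Tp B y)).card

noncomputable def sSm (B : Finset (ℤ × ℤ)) (x₀ : ℤ) : Finset ℤ :=
  (Icc (0:ℤ) (x₀-1)).filter (fun x => Sp B x)

noncomputable def CU (B : Finset (ℤ × ℤ)) (θ x₀ : ℤ) : ℕ :=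
  ∑ x ∈ sSm B x₀, ((Icc (0:ℤ) (θ-1)).filter (fun y => Lam B (x, y))).card

noncomputable def eC (B : Finset (ℤ × ℤ)) (α a' β b' : ℤ) : ℤ :=
  (CU B ((α-1)*(a'-1)*b' + (β-1)*(b'-1)) ((β-1)*(b'-1)*a' + (α-1)*(a'-1)) : ℤ)
    - ((sSm B ((β-1)*(b'-1)*a' + (α-1)*(a'-1))).card : ℤ) * ((α-1)*(a'-1)*b' + (β-1)*(b'-1))
    - ((β-1)*(b'-1)*a' + (α-1)*(a'-1)) * (cInf B ((α-1)*(a'-1)*b' + (β-1)*(b'-1)) : ℤ)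
    + ((β-1)*(b'-1)*a' + (α-1)*(a'-1)) * ((α-1)*(a'-1)*b' + (β-1)*(b'-1))

variable {B : Finset (ℤ × ℤ)} {α a' β b' : ℤ}

lemma boxCount (g : Good B α a' β b') {X Y : ℤ}
    (hX : (β-1)*(b'-1)*a' + (α-1)*(a'-1) ≤ X) (hY : (α-1)*(a'-1)*b' + (β-1)*(b'-1) ≤ Y) :
    ((((Icc (0:ℤ) X) ×ˢ (Icc (0:ℤ) Y)).filter (fun p => Lam B p)).card : ℤ)
      = (X+1)*(Y+1) - (X+1)*(uC B β b') - (Y+1)*(gC B α a') + eC B α a' β b' := by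
  have ha' := g.ha'
  have hb' := g.hb'
  have hα := g.hα
  have hβ := g.hβ
  obtain ⟨Fx, hFxd⟩ : ∃ t, t = (α-1)*(a'-1) := ⟨_, rfl⟩
  obtain ⟨Fy, hFyd⟩ : ∃ t, t = (β-1)*(b'-1) := ⟨_, rfl⟩
  rw [← hFxd, ← hFyd] at hX hY
  have hFx0 : (0:ℤ) ≤ Fx := hFxd ▸ mul_nonneg (by linarith) (by linarith)
  have hFy0 : (0:ℤ) ≤ Fy := hFyd ▸ mul_nonneg (by linarith) (by linarith)
  obtain ⟨θ, hθd⟩ : ∃ t, t = Fx*b' + Fy := ⟨_, rfl⟩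
  obtain ⟨x₀, hx₀d⟩ : ∃ t, t = Fy*a' + Fx := ⟨_, rfl⟩
  rw [← hθd] at hY
  rw [← hx₀d] at hX
  have hθ0 : 0 ≤ θ := by rw [hθd]; nlinarith only [hFx0, hFy0, hb']
  have hx₀0 : 0 ≤ x₀ := by rw [hx₀d]; nlinarith only [hFx0, hFy0, ha']
  have hFyθ : Fy ≤ θ := by rw [hθd]; nlinarith only [hFx0, hb']
  have hFxx₀ : Fx ≤ x₀ := by rw [hx₀d]; nlinarith only [hFy0, ha']
  -- step 1 : card as a sum of column cards
  have step1 : (((Icc (0:ℤ) X) ×ˢ (Icc (0:ℤ) Y)).filter (fun p => Lam B p)).card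
      = ∑ x ∈ Icc (0:ℤ) X, ((Icc (0:ℤ) Y).filter (fun y => Lam B (x, y))).card := by
    rw [Finset.card_filter, Finset.sum_product]
    exact Finset.sum_congr rfl fun x _ => (Finset.card_filter _ _).symm
  -- column formulas
  have hcol0 : ∀ x : ℤ, ¬ Sp B x → ((Icc (0:ℤ) Y).filter (fun y => Lam B (x, y))) = ∅ := by
    intro x hx
    apply Finset.filter_eq_empty_iff.2
    intro y _ hl
    exact hx ⟨y, hl⟩
  have hcol : ∀ x : ℤ, Sp B x →
      (((Icc (0:ℤ) Y).filter (fun y => Lam B (x, y))).card : ℤ)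
        = (((Icc (0:ℤ) (θ-1)).filter (fun y => Lam B (x, y))).card : ℤ) + (Y + 1 - θ) := by
    intro x hx
    have hunion : (Icc (0:ℤ) Y).filter (fun y => Lam B (x, y))
        = ((Icc (0:ℤ) (θ-1)).filter (fun y => Lam B (x, y))) ∪ Icc θ Y := by
      ext y
      simp only [Finset.mem_filter, Finset.mem_union, Finset.mem_Icc]
      constructor
      · rintro ⟨⟨h1, h2⟩, h3⟩
        by_cases hc : y ≤ θ - 1
        · exact Or.inl ⟨⟨h1, hc⟩, h3⟩
        · exact Or.inr ⟨by omega, h2⟩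
      · rintro (⟨⟨h1, h2⟩, h3⟩ | ⟨h1, h2⟩)
        · exact ⟨⟨h1, by omega⟩, h3⟩
        · exact ⟨⟨by omega, h2⟩, colTail g hx (by rw [← hFxd, ← hFyd, ← hθd]; exact h1)⟩
    rw [hunion, Finset.card_union_of_disjoint]
    · rw [Int.card_Icc]
      push_cast [Int.toNat_of_nonneg (by omega : (0:ℤ) ≤ Y + 1 - θ)]
      ring
    · rw [Finset.disjoint_left]
      intro y hy1 hy2
      have h1 := (Finset.mem_filter.1 hy1).1
      rw [Finset.mem_Icc] at h1 hy2
      omega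
  -- stabilized columns
  have hstab : ∀ x : ℤ, x₀ ≤ x →
      ((Icc (0:ℤ) (θ-1)).filter (fun y => Lam B (x, y))) = ((Icc (0:ℤ) (θ-1)).filter (fun y => Tp B y)) := by
    intro x hx
    apply Finset.filter_congr
    intro y _
    constructor
    · intro h; exact ⟨x, h⟩
    · intro h; exact rowTail g h (by rw [← hFyd, ← hFxd, ← hx₀d]; omega)
  -- split the sum
  have hsplitIcc : Icc (0:ℤ) X = Icc (0:ℤ) (x₀-1) ∪ Icc x₀ X := by
    ext z
    simp only [Finset.mem_Icc, Finset.mem_union]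
    omega
  have hdisj : Disjoint (Icc (0:ℤ) (x₀-1)) (Icc x₀ X) := by
    rw [Finset.disjoint_left]
    intro z h1 h2
    rw [Finset.mem_Icc] at h1 h2
    omega
  have step2 : (∑ x ∈ Icc (0:ℤ) X, (((Icc (0:ℤ) Y).filter (fun y => Lam B (x, y))).card : ℤ))
      = (∑ x ∈ Icc (0:ℤ) (x₀-1), (((Icc (0:ℤ) Y).filter (fun y => Lam B (x, y))).card : ℤ))
        + (∑ x ∈ Icc x₀ X, (((Icc (0:ℤ) Y).filter (fun y => Lam B (x, y))).card : ℤ)) := by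
    rw [hsplitIcc, Finset.sum_union hdisj]
  -- the high part
  have step3 : (∑ x ∈ Icc x₀ X, (((Icc (0:ℤ) Y).filter (fun y => Lam B (x, y))).card : ℤ))
      = (X - x₀ + 1) * ((cInf B θ : ℤ) + (Y + 1 - θ)) := by
    have hconst : ∀ x ∈ Icc x₀ X, (((Icc (0:ℤ) Y).filter (fun y => Lam B (x, y))).card : ℤ)
        = ((cInf B θ : ℤ) + (Y + 1 - θ)) := by
      intro x hx
      rw [Finset.mem_Icc] at hx
      rw [hcol x (sp_of_ge g (by rw [← hFxd]; omega)), hstab x (by omega)]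
      rfl
    rw [Finset.sum_congr rfl hconst, Finset.sum_const, nsmul_eq_mul, Int.card_Icc,
      Int.toNat_of_nonneg (by omega : (0:ℤ) ≤ X + 1 - x₀)]
    ring
  -- the low part
  have step4 : (∑ x ∈ Icc (0:ℤ) (x₀-1), (((Icc (0:ℤ) Y).filter (fun y => Lam B (x, y))).card : ℤ))
      = (CU B θ x₀ : ℤ) + ((sSm B x₀).card : ℤ) * (Y + 1 - θ) := by
    have h1 : ∀ x ∈ Icc (0:ℤ) (x₀-1), (((Icc (0:ℤ) Y).filter (fun y => Lam B (x, y))).card : ℤ)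
        = if Sp B x then (((Icc (0:ℤ) (θ-1)).filter (fun y => Lam B (x, y))).card : ℤ) + (Y + 1 - θ) else 0 := by
      intro x _
      by_cases hx : Sp B x
      · rw [if_pos hx]; exact hcol x hx
      · rw [if_neg hx, hcol0 x hx]; simp
    rw [Finset.sum_congr rfl h1, Finset.sum_ite, Finset.sum_const_zero, add_zero]
    have h2 : (Icc (0:ℤ) (x₀-1)).filter (fun x => Sp B x) = sSm B x₀ := rfl
    rw [h2, Finset.sum_add_distrib, Finset.sum_const, nsmul_eq_mul]
    congr 1
    rw [CU]
    push_cast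
    rfl
  -- gap identities
  have huCid : (θ : ℤ) = (cInf B θ : ℤ) + (uC B β b' : ℤ) := by
    have h1 : ((Icc (0:ℤ) (θ-1)).filter (fun y => ¬ Tp B y))
        = ((Icc (0:ℤ) (Fy-1)).filter (fun y => ¬ Tp B y)) := by
      ext z
      simp only [Finset.mem_filter, Finset.mem_Icc]
      constructor
      · rintro ⟨⟨h1, h2⟩, h3⟩
        refine ⟨⟨h1, ?_⟩, h3⟩
        by_contra hc
        exact h3 (tp_of_ge g (by rw [← hFyd]; omega))
      · rintro ⟨⟨h1, h2⟩, h3⟩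
        exact ⟨⟨h1, by omega⟩, h3⟩
    have h2 := Finset.card_filter_add_card_filter_not
      (s := Icc (0:ℤ) (θ-1)) (p := fun y => Tp B y)
    rw [Int.card_Icc] at h2
    have h3 : ((θ - 1 + 1 - 0).toNat : ℤ) = θ := by
      rw [Int.toNat_of_nonneg (by omega)]; ring
    rw [uC, cInf, ← hFyd, ← h1]
    omega
  have hgCid : (x₀ : ℤ) = ((sSm B x₀).card : ℤ) + (gC B α a' : ℤ) := by
    have h1 : ((Icc (0:ℤ) (x₀-1)).filter (fun x => ¬ Sp B x))
        = ((Icc (0:ℤ) (Fx-1)).filter (fun x => ¬ Sp B x)) := by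
      ext z
      simp only [Finset.mem_filter, Finset.mem_Icc]
      constructor
      · rintro ⟨⟨h1, h2⟩, h3⟩
        refine ⟨⟨h1, ?_⟩, h3⟩
        by_contra hc
        exact h3 (sp_of_ge g (by rw [← hFxd]; omega))
      · rintro ⟨⟨h1, h2⟩, h3⟩
        exact ⟨⟨h1, by omega⟩, h3⟩
    have h2 := Finset.card_filter_add_card_filter_not
      (s := Icc (0:ℤ) (x₀-1)) (p := fun x => Sp B x)
    rw [Int.card_Icc] at h2
    have h3 : ((x₀ - 1 + 1 - 0).toNat : ℤ) = x₀ := by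
      rw [Int.toNat_of_nonneg (by omega)]; ring
    rw [gC, sSm, ← hFxd, ← h1]
    omega
  -- assemble
  have hE : eC B α a' β b' = (CU B θ x₀ : ℤ) - ((sSm B x₀).card : ℤ) * θ
      - x₀ * (cInf B θ : ℤ) + x₀ * θ := by
    rw [eC, hθd, hx₀d, hFxd, hFyd]
  rw [step1]
  push_cast
  rw [step2, step3, step4, hE]
  linear_combination (-(X + 1)) * huCid + (-(Y + 1)) * hgCid

end Counting2
section Invariance

lemma tp_reflX {B : Finset (ℤ × ℤ)} {a' y : ℤ} :
    Tp (B.image (fun p => (a' - p.1, p.2))) y ↔ Tp B y := by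
  constructor
  · rintro ⟨x, r, hr⟩
    exact ⟨(r : ℤ) * a' - x, r, mem_iterSum_reflX.1 hr⟩
  · rintro ⟨x, r, hr⟩
    refine ⟨(r : ℤ) * a' - x, r, mem_iterSum_reflX.2 ?_⟩
    have : (r : ℤ) * a' - ((r : ℤ) * a' - x) = x := by ring
    rw [this]
    exact hr

lemma sp_reflY {B : Finset (ℤ × ℤ)} {b' x : ℤ} :
    Sp (B.image (fun p => (p.1, b' - p.2))) x ↔ Sp B x := by
  constructor
  · rintro ⟨y, r, hr⟩
    exact ⟨(r : ℤ) * b' - y, r, mem_iterSum_reflY.1 hr⟩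
  · rintro ⟨y, r, hr⟩
    refine ⟨(r : ℤ) * b' - y, r, mem_iterSum_reflY.2 ?_⟩
    have : (r : ℤ) * b' - ((r : ℤ) * b' - y) = y := by ring
    rw [this]
    exact hr

open scoped Classical in
lemma uC_reflX {B : Finset (ℤ × ℤ)} {a' β b' : ℤ} :
    uC (B.image (fun p => (a' - p.1, p.2))) β b' = uC B β b' := by
  unfold uC
  congr 1
  apply Finset.filter_congr
  intro y _
  rw [tp_reflX]

open scoped Classical in
lemma gC_reflY {B : Finset (ℤ × ℤ)} {α a' b' : ℤ} :
    gC (B.image (fun p => (p.1, b' - p.2))) α a' = gC B α a' := by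
  unfold gC
  congr 1
  apply Finset.filter_congr
  intro x _
  rw [sp_reflY]

lemma image_comm {B : Finset (ℤ × ℤ)} {a' b' : ℤ} :
    (B.image (fun p => (p.1, b' - p.2))).image (fun p => (a' - p.1, p.2))
      = (B.image (fun p => (a' - p.1, p.2))).image (fun p => (p.1, b' - p.2)) := by
  rw [Finset.image_image, Finset.image_image]
  rfl

/-- threshold inequality -/
lemma threshold {B : Finset (ℤ × ℤ)} {α a' β b' M : ℤ} (g : Good B α a' β b')
    (haM : a' ≤ M) (hbM : b' ≤ M) {k : ℕ} (hk : 2 * M ^ 2 ≤ (k : ℤ))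
    {Y : ℤ} (hY : (k : ℤ) * b' ≤ 2 * Y + 2) :
    (α-1)*(a'-1)*b' + (β-1)*(b'-1) ≤ Y := by
  have ha' := g.ha'
  have hb' := g.hb'
  have hα := g.hα
  have hβ := g.hβ
  have hM1 : (1 : ℤ) ≤ M := by linarith
  have hMM0 : (0:ℤ) ≤ (M-2)*(M-1) := by
    rcases le_or_gt 2 M with h2 | h2
    · exact mul_nonneg (by linarith) (by linarith)
    · have hM : M = 1 := by omega
      rw [hM]
      norm_num
  have hFxb : (α-1)*(a'-1) ≤ (M-2)*(M-1) := by
    rcases g.alpha_lt with h | h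
    · have h1 : α - 1 ≤ M - 2 := by linarith
      have h2 : a' - 1 ≤ M - 1 := by linarith
      nlinarith only [h1, h2, hα, ha', hM1]
    · rw [h]; simpa using hMM0
  have hFyb : (β-1)*(b'-1) ≤ (M-1)*(b'-1) := by
    apply mul_le_mul_of_nonneg_right (by linarith [g.hβb]) (by linarith)
  have hkey : (M-2)*(M-1)*b' + (M-1)*(b'-1) + 1 ≤ M^2*b' := by
    nlinarith only [hM1, hb', mul_nonneg (by linarith : (0:ℤ) ≤ 2*M-2) (by linarith : (0:ℤ) ≤ b'-1)]
  have hkb : 2 * M^2 * b' ≤ (k:ℤ) * b' := by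
    have := mul_le_mul_of_nonneg_right hk (le_of_lt hb')
    linarith
  have hb2 : (α-1)*(a'-1)*b' ≤ (M-2)*(M-1)*b' := by
    apply mul_le_mul_of_nonneg_right hFxb (le_of_lt hb')
  nlinarith only [hb2, hFyb, hkey, hkb, hY]

end Invariance
end St10

set_option maxHeartbeats 2000000 in
open St10 Finset in
theorem stmt10 (A : Finset (ℤ × ℤ)) (a a' b b' : ℤ)
    (hnn : ∀ p ∈ A, 0 ≤ p.1 ∧ 0 ≤ p.2)
    (ha : 0 < a) (hamin : ∀ p ∈ A, p.1 ≠ 0 → a ≤ p.1)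
    (ha' : ∀ p ∈ A, p.1 ≤ a')
    (hb : 0 < b) (hbmin : ∀ p ∈ A, p.2 ≠ 0 → b ≤ p.2)
    (hb' : ∀ p ∈ A, p.2 ≤ b')
    (hca : Int.gcd a a' = 1) (hcb : Int.gcd b b' = 1)
    (hsub : ({((0:ℤ),(0:ℤ)), (a,0), (0,b), (a',0), (0,b'), (a,b), (a,b'), (a',b),
      (a',b')} : Finset (ℤ × ℤ)) ⊆ A) :
    ∃ ℓ ℓ₁ ℓ₂ : ℤ, ∀ k : ℕ, max (2*a'^2) (2*b'^2) ≤ (k : ℤ) →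
      ((iterSum k A).card : ℤ) =
        (k:ℤ)^2 * a' * b' - ℓ - ℓ₁ * a' * (k:ℤ) - ℓ₂ * b' * (k:ℤ) := by
  classical
  have hmem : ∀ x ∈ ({0, a, a'} : Finset ℤ), ∀ y ∈ ({0, b, b'} : Finset ℤ), (x, y) ∈ A := by
    intro x hx y hy
    simp only [Finset.mem_insert, Finset.mem_singleton] at hx hy
    apply hsub
    simp only [Finset.mem_insert, Finset.mem_singleton, Prod.ext_iff]
    rcases hx with rfl | rfl | rfl <;> rcases hy with rfl | rfl | rfl <;> tauto
  have ha0 : ((a, 0) : ℤ × ℤ) ∈ A := hmem a (by simp) 0 (by simp)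
  have h0b : ((0, b) : ℤ × ℤ) ∈ A := hmem 0 (by simp) b (by simp)
  have haa' : a ≤ a' := ha' _ ha0
  have hbb' : b ≤ b' := hb' _ h0b
  have ha'pos : (0:ℤ) < a' := lt_of_lt_of_le ha haa'
  have hb'pos : (0:ℤ) < b' := lt_of_lt_of_le hb hbb'
  have g : Good A a a' b b' :=
    ⟨ha, haa', hb, hbb', Int.isCoprime_iff_gcd_eq_one.2 hca, Int.isCoprime_iff_gcd_eq_one.2 hcb,
      fun p hp => ⟨(hnn p hp).1, ha' p hp, (hnn p hp).2, hb' p hp⟩, hmem⟩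
  set M := max a' b' with hMdef
  have haM : a' ≤ M := le_max_left _ _
  have hbM : b' ≤ M := le_max_right _ _
  -- quadrant sets
  set BLR := A.image (fun p => (p.1, b' - p.2)) with hBLRdef
  set BRL := A.image (fun p => (a' - p.1, p.2)) with hBRLdef
  set BRR := BLR.image (fun p => (a' - p.1, p.2)) with hBRRdef
  have gLR : Good BLR a a' (if b' - b = 0 then b' else b' - b) b' := g.reflY
  have gRL : Good BRL (if a' - a = 0 then a' else a' - a) a' b b' := g.reflX
  have gRR : Good BRR (if a' - a = 0 then a' else a' - a) a' (if b' - b = 0 then b' else b' - b) b' :=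
    gLR.reflX
  set α' := if a' - a = 0 then a' else a' - a with hα'def
  set β' := if b' - b = 0 then b' else b' - b with hβ'def
  -- invariances
  have hu3 : uC BRL b b' = uC A b b' := uC_reflX
  have hu4 : uC BRR β' b' = uC BLR β' b' := uC_reflX
  have hg2 : gC BLR a a' = gC A a a' := gC_reflY
  have hg4 : gC BRR α' a' = gC BRL α' a' := by
    have h1 : BRR = BRL.image (fun p => (p.1, b' - p.2)) := by
      rw [hBRRdef, hBLRdef, hBRLdef, image_comm]
    rw [h1]
    exact gC_reflY
  refine ⟨(uC A b b' : ℤ) + uC BLR β' b' + gC A a a' + gC BRL α' a' - 1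
      - (eC A a a' b b' + eC BLR a a' β' b' + eC BRL α' a' b b' + eC BRR α' a' β' b'),
    (uC A b b' : ℤ) + uC BLR β' b' - 1, (gC A a a' : ℤ) + gC BRL α' a' - 1, ?_⟩
  intro k hk
  have hk2 : 2 * M ^ 2 ≤ (k : ℤ) := by
    rcases le_total a' b' with h | h
    · have h1 : M = b' := max_eq_right h
      rw [h1]
      exact le_trans (le_max_right _ _) hk
    · have h1 : M = a' := max_eq_left h
      rw [h1]
      exact le_trans (le_max_left _ _) hk
  have hM1 : (1:ℤ) ≤ M := by omega
  have hkpos : (0:ℤ) ≤ (k:ℤ) := by positivity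
  obtain ⟨ξ, hξ⟩ := Int.even_or_odd' ((k:ℤ) * a')
  obtain ⟨η, hη⟩ := Int.even_or_odd' ((k:ℤ) * b')
  have hka : 0 ≤ (k:ℤ) * a' := by positivity
  have hkb : 0 ≤ (k:ℤ) * b' := by positivity
  have hξ0 : 0 ≤ ξ := by omega
  have hη0 : 0 ≤ η := by omega
  have h2ξ : 2*ξ ≤ (k:ℤ)*a' := by omega
  have hξ1 : (k:ℤ)*a' ≤ 2*ξ+1 := by omega
  have h2η : 2*η ≤ (k:ℤ)*b' := by omega
  have hη1 : (k:ℤ)*b' ≤ 2*η+1 := by omega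
  set S := iterSum k A with hSdef
  have hboxS : ∀ p ∈ S, 0 ≤ p.1 ∧ p.1 ≤ (k:ℤ)*a' ∧ 0 ≤ p.2 ∧ p.2 ≤ (k:ℤ)*b' :=
    fun p hp => iterSum_box g.box hp
  -- partition of the count
  have hpart : S.card
      = (S.filter (fun p => p.1 ≤ ξ ∧ p.2 ≤ η)).card
      + (S.filter (fun p => p.1 ≤ ξ ∧ ¬ p.2 ≤ η)).card
      + ((S.filter (fun p => ¬ p.1 ≤ ξ ∧ p.2 ≤ η)).card
      + (S.filter (fun p => ¬ p.1 ≤ ξ ∧ ¬ p.2 ≤ η)).card) := by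
    have h1 := Finset.card_filter_add_card_filter_not
      (s := S) (p := fun p : ℤ × ℤ => p.1 ≤ ξ)
    have h2 := Finset.card_filter_add_card_filter_not
      (s := S.filter (fun p : ℤ × ℤ => p.1 ≤ ξ)) (p := fun p : ℤ × ℤ => p.2 ≤ η)
    have h3 := Finset.card_filter_add_card_filter_not
      (s := S.filter (fun p : ℤ × ℤ => ¬ p.1 ≤ ξ)) (p := fun p : ℤ × ℤ => p.2 ≤ η)
    rw [Finset.filter_filter, Finset.filter_filter] at h2 h3
    omega
  -- piece LL
  have c1 : ((S.filter (fun p => p.1 ≤ ξ ∧ p.2 ≤ η)).card : ℤ)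
      = (ξ+1)*(η+1) - (ξ+1)*(uC A b b') - (η+1)*(gC A a a') + eC A a a' b b' := by
    have hset : S.filter (fun p => p.1 ≤ ξ ∧ p.2 ≤ η)
        = ((Icc (0:ℤ) ξ) ×ˢ (Icc (0:ℤ) η)).filter (fun p => Lam A p) := by
      ext p
      simp only [Finset.mem_filter, Finset.mem_product, Finset.mem_Icc]
      constructor
      · rintro ⟨hp, h1, h2⟩
        obtain ⟨b1, b2, b3, b4⟩ := hboxS p hp
        exact ⟨⟨⟨b1, h1⟩, b3, h2⟩, k, hp⟩
      · rintro ⟨⟨⟨h1, h2⟩, h3, h4⟩, hlam⟩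
        have hq := (quarter g haM hbM hk2 (x := p.1) (y := p.2) (by omega) (by omega)).2 hlam
        exact ⟨hq, h2, h4⟩
    rw [hset]
    exact boxCount g (threshold g.swap hbM haM hk2 (by omega)) (threshold g haM hbM hk2 (by omega))
  -- piece LR
  have c2 : ((S.filter (fun p => p.1 ≤ ξ ∧ ¬ p.2 ≤ η)).card : ℤ)
      = (ξ+1)*(((k:ℤ)*b'-η-1)+1) - (ξ+1)*(uC BLR β' b')
        - ((((k:ℤ)*b'-η-1))+1)*(gC BLR a a') + eC BLR a a' β' b' := by
    have hcard : (S.filter (fun p => p.1 ≤ ξ ∧ ¬ p.2 ≤ η)).card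
        = (((Icc (0:ℤ) ξ) ×ˢ (Icc (0:ℤ) ((k:ℤ)*b'-η-1))).filter (fun q => Lam BLR q)).card := by
      apply Finset.card_nbij (fun p => (p.1, (k:ℤ)*b' - p.2))
      · intro p hp
        simp only [Finset.mem_coe, Finset.mem_filter, Finset.mem_product, Finset.mem_Icc] at hp ⊢
        obtain ⟨hpS, h1, h2⟩ := hp
        obtain ⟨b1, b2, b3, b4⟩ := hboxS p hpS
        refine ⟨⟨⟨b1, h1⟩, by omega, by omega⟩, k, ?_⟩
        apply (mem_iterSum_reflY (B := A) (b' := b')).2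
        have he : (k:ℤ)*b' - ((k:ℤ)*b' - p.2) = p.2 := by ring
        rw [he]
        exact hpS
      · intro p hp q hq h
        simp only [Prod.ext_iff] at h
        obtain ⟨h1, h2⟩ := h
        exact Prod.ext h1 (by omega)
      · intro q hq
        simp only [Finset.coe_filter, Set.mem_setOf_eq, Finset.mem_product, Finset.mem_Icc] at hq
        obtain ⟨⟨⟨h1, h2⟩, h3, h4⟩, hlam⟩ := hq
        have hq2 : q ∈ iterSum k BLR :=
          (quarter gLR haM hbM hk2 (x := q.1) (y := q.2) (by omega) (by omega)).2 hlam
        have hp : ((q.1, (k:ℤ)*b' - q.2) : ℤ × ℤ) ∈ iterSum k A :=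
          (mem_iterSum_reflY (B := A) (b' := b')).1 hq2
        refine ⟨(q.1, (k:ℤ)*b' - q.2), ?_, ?_⟩
        · simp only [Finset.coe_filter, Set.mem_setOf_eq]
          exact ⟨hp, h2, by simp; omega⟩
        · refine Prod.ext rfl ?_
          simp
    rw [hcard]
    exact boxCount gLR (threshold gLR.swap hbM haM hk2 (by omega))
      (threshold gLR haM hbM hk2 (by omega))
  -- piece RL
  have c3 : ((S.filter (fun p => ¬ p.1 ≤ ξ ∧ p.2 ≤ η)).card : ℤ)
      = (((k:ℤ)*a'-ξ-1)+1)*(η+1) - ((((k:ℤ)*a'-ξ-1))+1)*(uC BRL b b')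
        - (η+1)*(gC BRL α' a') + eC BRL α' a' b b' := by
    have hcard : (S.filter (fun p => ¬ p.1 ≤ ξ ∧ p.2 ≤ η)).card
        = (((Icc (0:ℤ) ((k:ℤ)*a'-ξ-1)) ×ˢ (Icc (0:ℤ) η)).filter (fun q => Lam BRL q)).card := by
      apply Finset.card_nbij (fun p => ((k:ℤ)*a' - p.1, p.2))
      · intro p hp
        simp only [Finset.mem_coe, Finset.mem_filter, Finset.mem_product, Finset.mem_Icc] at hp ⊢
        obtain ⟨hpS, h1, h2⟩ := hp
        obtain ⟨b1, b2, b3, b4⟩ := hboxS p hpS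
        refine ⟨⟨⟨by omega, by omega⟩, b3, h2⟩, k, ?_⟩
        apply (mem_iterSum_reflX (B := A) (a' := a')).2
        have he : (k:ℤ)*a' - ((k:ℤ)*a' - p.1) = p.1 := by ring
        rw [he]
        exact hpS
      · intro p hp q hq h
        simp only [Prod.ext_iff] at h
        obtain ⟨h1, h2⟩ := h
        exact Prod.ext (by omega) h2
      · intro q hq
        simp only [Finset.coe_filter, Set.mem_setOf_eq, Finset.mem_product, Finset.mem_Icc] at hq
        obtain ⟨⟨⟨h1, h2⟩, h3, h4⟩, hlam⟩ := hq
        have hq2 : q ∈ iterSum k BRL :=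
          (quarter gRL haM hbM hk2 (x := q.1) (y := q.2) (by omega) (by omega)).2 hlam
        have hp : (((k:ℤ)*a' - q.1, q.2) : ℤ × ℤ) ∈ iterSum k A :=
          (mem_iterSum_reflX (B := A) (a' := a')).1 hq2
        refine ⟨((k:ℤ)*a' - q.1, q.2), ?_, ?_⟩
        · simp only [Finset.coe_filter, Set.mem_setOf_eq]
          exact ⟨hp, by simp; omega, h4⟩
        · refine Prod.ext ?_ rfl
          simp
    rw [hcard]
    exact boxCount gRL (threshold gRL.swap hbM haM hk2 (by omega))
      (threshold gRL haM hbM hk2 (by omega))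
  -- piece RR
  have c4 : ((S.filter (fun p => ¬ p.1 ≤ ξ ∧ ¬ p.2 ≤ η)).card : ℤ)
      = (((k:ℤ)*a'-ξ-1)+1)*(((k:ℤ)*b'-η-1)+1) - ((((k:ℤ)*a'-ξ-1))+1)*(uC BRR β' b')
        - ((((k:ℤ)*b'-η-1))+1)*(gC BRR α' a') + eC BRR α' a' β' b' := by
    have hcard : (S.filter (fun p => ¬ p.1 ≤ ξ ∧ ¬ p.2 ≤ η)).card
        = (((Icc (0:ℤ) ((k:ℤ)*a'-ξ-1)) ×ˢ (Icc (0:ℤ) ((k:ℤ)*b'-η-1))).filter (fun q => Lam BRR q)).card := by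
      apply Finset.card_nbij (fun p => ((k:ℤ)*a' - p.1, (k:ℤ)*b' - p.2))
      · intro p hp
        simp only [Finset.mem_coe, Finset.mem_filter, Finset.mem_product, Finset.mem_Icc] at hp ⊢
        obtain ⟨hpS, h1, h2⟩ := hp
        obtain ⟨b1, b2, b3, b4⟩ := hboxS p hpS
        refine ⟨⟨⟨by omega, by omega⟩, by omega, by omega⟩, k, ?_⟩
        apply (mem_iterSum_reflX (B := BLR) (a' := a')).2
        apply (mem_iterSum_reflY (B := A) (b' := b')).2
        have he1 : (k:ℤ)*a' - ((k:ℤ)*a' - p.1) = p.1 := by ring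
        have he2 : (k:ℤ)*b' - ((k:ℤ)*b' - p.2) = p.2 := by ring
        rw [he1, he2]
        exact hpS
      · intro p hp q hq h
        simp only [Prod.ext_iff] at h
        obtain ⟨h1, h2⟩ := h
        exact Prod.ext (by omega) (by omega)
      · intro q hq
        simp only [Finset.coe_filter, Set.mem_setOf_eq, Finset.mem_product, Finset.mem_Icc] at hq
        obtain ⟨⟨⟨h1, h2⟩, h3, h4⟩, hlam⟩ := hq
        have hq2 : q ∈ iterSum k BRR :=
          (quarter gRR haM hbM hk2 (x := q.1) (y := q.2) (by omega) (by omega)).2 hlam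
        have hq3 := (mem_iterSum_reflX (B := BLR) (a' := a')).1 hq2
        have hp : (((k:ℤ)*a' - q.1, (k:ℤ)*b' - q.2) : ℤ × ℤ) ∈ iterSum k A :=
          (mem_iterSum_reflY (B := A) (b' := b')).1 hq3
        refine ⟨((k:ℤ)*a' - q.1, (k:ℤ)*b' - q.2), ?_, ?_⟩
        · simp only [Finset.coe_filter, Set.mem_setOf_eq]
          exact ⟨hp, by simp; omega, by simp; omega⟩
        · refine Prod.ext ?_ ?_ <;> simp
    rw [hcard]
    exact boxCount gRR (threshold gRR.swap hbM haM hk2 (by omega))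
      (threshold gRR haM hbM hk2 (by omega))
  -- final algebra
  have hfinal : (S.card : ℤ)
      = ((S.filter (fun p => p.1 ≤ ξ ∧ p.2 ≤ η)).card : ℤ)
      + ((S.filter (fun p => p.1 ≤ ξ ∧ ¬ p.2 ≤ η)).card : ℤ)
      + (((S.filter (fun p => ¬ p.1 ≤ ξ ∧ p.2 ≤ η)).card : ℤ)
      + ((S.filter (fun p => ¬ p.1 ≤ ξ ∧ ¬ p.2 ≤ η)).card : ℤ)) := by
    exact_mod_cast congrArg (Nat.cast : ℕ → ℤ) hpart
  rw [hfinal, c1, c2, c3, c4, hu3, hu4, hg2, hg4]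
  ring
end

section
/- Let a, a', b, b' be positive integers and let A ⊆ ℕ₀² be a set containing the nine points {(0,0), (a,0), (a',0), (0,b), (0,b'), (a,b), (a,b'), (a',b), (a',b')}. Let k be a positive integer and suppose x = pa + qa' and y = rb + tb' for non-negative integers p, q, r, t with p + q ≤ k and r + t ≤ k. Then (x, y) ∈ kA. -/
open Pointwise

/-- The `n`-fold iterated sumset of a set: `iterSumSet 0 A = {0}`,
`iterSumSet (n+1) A = A + iterSumSet n A`. -/
def iterSumSet : ℕ → Set (ℤ × ℤ) → Set (ℤ × ℤ)
  | 0, _ => {0}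
  | n + 1, A => A + iterSumSet n A

lemma stmt14_aux (a a' b b' : ℤ) (A : Set (ℤ × ℤ))
    (hsub : ({((0:ℤ),(0:ℤ)), (a,0), (a',0), (0,b), (0,b'), (a,b), (a,b'), (a',b),
      (a',b')} : Set (ℤ × ℤ)) ⊆ A) :
    ∀ k p q r t : ℕ, p + q ≤ k → r + t ≤ k →
      (((p:ℤ) * a + (q:ℤ) * a', (r:ℤ) * b + (t:ℤ) * b') ∈ iterSumSet k A) := by
  intro k
  induction k with
  | zero =>
    intro p q r t hpq hrt
    have h : p = 0 ∧ q = 0 ∧ r = 0 ∧ t = 0 := by omega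
    obtain ⟨rfl, rfl, rfl, rfl⟩ := h
    simp [iterSumSet, Prod.ext_iff]
  | succ k ih =>
    intro p q r t hpq hrt
    have hx : ∃ u p' q', (u = 0 ∨ u = a ∨ u = a') ∧ p' + q' ≤ k ∧
        (p:ℤ) * a + (q:ℤ) * a' = u + ((p':ℤ) * a + (q':ℤ) * a') := by
      rcases p with _ | p
      · rcases q with _ | q
        · exact ⟨0, 0, 0, Or.inl rfl, by omega, by push_cast; ring⟩
        · exact ⟨a', 0, q, Or.inr (Or.inr rfl), by omega, by push_cast; ring⟩
      · exact ⟨a, p, q, Or.inr (Or.inl rfl), by omega, by push_cast; ring⟩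
    have hy : ∃ v r' t', (v = 0 ∨ v = b ∨ v = b') ∧ r' + t' ≤ k ∧
        (r:ℤ) * b + (t:ℤ) * b' = v + ((r':ℤ) * b + (t':ℤ) * b') := by
      rcases r with _ | r
      · rcases t with _ | t
        · exact ⟨0, 0, 0, Or.inl rfl, by omega, by push_cast; ring⟩
        · exact ⟨b', 0, t, Or.inr (Or.inr rfl), by omega, by push_cast; ring⟩
      · exact ⟨b, r, t, Or.inr (Or.inl rfl), by omega, by push_cast; ring⟩
    obtain ⟨u, p', q', hu, hpq', hxval⟩ := hx
    obtain ⟨v, r', t', hv, hrt', hyval⟩ := hy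
    have hmem : (u, v) ∈ A := hsub (by
      rcases hu with rfl | rfl | rfl <;> rcases hv with rfl | rfl | rfl <;> simp)
    have h2 := Set.add_mem_add hmem (ih p' q' r' t' hpq' hrt')
    show _ ∈ A + iterSumSet k A
    convert h2 using 1
    rw [hxval, hyval, Prod.mk_add_mk]
theorem stmt14 (a a' b b' : ℤ) (ha : 0 < a) (ha' : 0 < a') (hb : 0 < b) (hb' : 0 < b')
    (A : Set (ℤ × ℤ)) (hnn : ∀ p ∈ A, 0 ≤ p.1 ∧ 0 ≤ p.2)
    (hsub : ({((0:ℤ),(0:ℤ)), (a,0), (a',0), (0,b), (0,b'), (a,b), (a,b'), (a',b),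
      (a',b')} : Set (ℤ × ℤ)) ⊆ A)
    (k : ℕ) (hk : 1 ≤ k) (p q r t : ℕ) (hpq : p + q ≤ k) (hrt : r + t ≤ k)
    (x y : ℤ) (hx : x = (p:ℤ) * a + (q:ℤ) * a') (hy : y = (r:ℤ) * b + (t:ℤ) * b') :
    (x, y) ∈ iterSumSet k A := by
  subst hx hy
  exact stmt14_aux a a' b b' A hsub k p q r t hpq hrt
end
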